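/- arXiv:math/0509648 — 8 statements merged into one kernel-verified Lean document; each statement's English description precedes it below -/
import Mathlib

section
/- For all natural numbers l, m, n, one has ∑_{k=0}^{l} (−1)^{m−k} · binom(l,k) · binom(m−k, n) · binom(2k, k−2l+m) = ∑_{k=0}^{l} binom(l,k) · binom(2k, n) · binom(n−l, m+n−3k−l), where both sides are integers. -/
/-!
Fix `l` and `n` and write `L(m)`, `R(m)` for the two sides. Both become the same sequence after
convolution with `binom(l, ·)`, i.e. after multiplying their generating series by `(1 + x)^l`,
which is a unit in `ℤ⟦x⟧`. The numbers `L(m)` are the coefficients of `xᵐ yⁿ` in `xˡ Aˡ` with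
`A = (1 - x(1+y))² + x(1+y)²`; since `(1 + x) A = 1 + x(y(1+x) + x)² =: B`, the convolution of `L`
is the coefficient of `xᵐ yⁿ` in `xˡ Bˡ`, namely `∑ₖ binom(l,k) binom(2k,n) binom(n, m+n-3k-l)`.
By Chu–Vandermonde, `binom(n, ·) = binom(l, ·) * binom(n-l, ·)`, this is also the convolution of `R`.
-/

/-- `zbinom x j` is the generalized binomial coefficient `binom(x, j)` with integer
upper argument `x` and integer lower argument `j`; it is `0` when `j < 0`. -/
def zbinom (x : ℤ) (j : ℤ) : ℤ := if 0 ≤ j then Ring.choose x j.toNat else 0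

open Polynomial Finset

lemma zbinom_of_neg (x : ℤ) {j : ℤ} (hj : j < 0) : zbinom x j = 0 :=
  if_neg hj.not_ge

lemma zbinom_natCast (x : ℤ) (j : ℕ) : zbinom x j = Ring.choose x j := by
  simp [zbinom]

lemma zbinom_natCast_natCast (N j : ℕ) : zbinom N j = N.choose j := by
  rw [zbinom_natCast, Ring.choose_natCast]

lemma coeff_X_pow_mul_one_add_X_pow (a N m : ℕ) :
    (X ^ a * (1 + X) ^ N : ℤ[X]).coeff m = zbinom N ((m : ℤ) - a) := by
  rw [coeff_X_pow_mul', coeff_one_add_X_pow]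
  split_ifs with h
  · rw [← Nat.cast_sub h, zbinom_natCast_natCast]
  · rw [zbinom_of_neg _ (by omega)]

lemma sum_range_ite_choose_mul (N e m : ℕ) (f : ℕ → ℤ) :
    ∑ i ∈ range (N + 1), (if m = e + i then (N.choose i : ℤ) * f i else 0) =
      zbinom N ((m : ℤ) - e) * f (m - e) := by
  by_cases h : e ≤ m
  · have hm (i : ℕ) : m = e + i ↔ m - e = i := by omega
    simp only [hm, sum_ite_eq, mem_range]
    rw [← Nat.cast_sub h, zbinom_natCast_natCast]
    split_ifs with hN
    · rfl
    · rw [Nat.choose_eq_zero_of_lt (by omega), Nat.cast_zero, zero_mul]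
  · rw [zbinom_of_neg _ (by omega), zero_mul]
    exact sum_eq_zero fun i _ => if_neg (by omega)

lemma sum_antidiagonal_choose_mul_zbinom (L M : ℕ) (x d : ℤ) (hd : 0 ≤ d) :
    ∑ p ∈ antidiagonal M, (L.choose p.1 : ℤ) * zbinom (x - L) (p.2 - d) = zbinom x (M - d) := by
  rw [Nat.sum_antidiagonal_eq_sum_range_succ_mk]
  obtain ht | ⟨T, hT⟩ : M - d < 0 ∨ ∃ T : ℕ, M - d = T := by
    rcases lt_or_ge ((M : ℤ) - d) 0 with h | h
    · exact .inl h
    · exact .inr ⟨(M - d).toNat, (Int.toNat_of_nonneg h).symm⟩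
  · rw [zbinom_of_neg _ ht]
    refine sum_eq_zero fun i hi => ?_
    rw [zbinom_of_neg _ (by omega), mul_zero]
  · have hTM : T + 1 ≤ M + 1 := by omega
    rw [hT, zbinom_natCast, ← add_sub_cancel (L : ℤ) x, Ring.add_choose_eq _ (.all _ _),
      Nat.sum_antidiagonal_eq_sum_range_succ_mk,
      ← sum_subset (range_subset_range.mpr hTM) fun i hiM hi => by
        rw [zbinom_of_neg _ (by simp at hiM hi; omega), mul_zero]]
    refine sum_congr rfl fun i hi => ?_
    have hiT : i ≤ T := by simp at hi; omega
    rw [Ring.choose_natCast, add_sub_cancel_left,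
      show ((M - i : ℕ) : ℤ) - d = (T - i : ℕ) by omega, zbinom_natCast]

lemma eq_of_sum_antidiagonal_choose_mul_eq {R : Type*} [CommRing R] (l : ℕ) {a b : ℕ → R}
    (h : ∀ m, ∑ p ∈ antidiagonal m, (l.choose p.1 : R) * a p.2 =
      ∑ p ∈ antidiagonal m, (l.choose p.1 : R) * b p.2) : a = b := by
  have hunit : IsUnit ((1 + PowerSeries.X) ^ l : PowerSeries R) :=
    (PowerSeries.isUnit_iff_constantCoeff.mpr (by simp)).pow l
  have hcoeff (c : ℕ → R) (m : ℕ) :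
      PowerSeries.coeff m ((1 + PowerSeries.X) ^ l * PowerSeries.mk c) =
        ∑ p ∈ antidiagonal m, (l.choose p.1 : R) * c p.2 := by
    have hpoly : ((1 + PowerSeries.X) ^ l : PowerSeries R) = ((1 + X) ^ l : R[X]) := by simp
    simp only [PowerSeries.coeff_mul, hpoly, Polynomial.coeff_coe, coeff_one_add_X_pow,
      PowerSeries.coeff_mk]
  have hmk : PowerSeries.mk a = PowerSeries.mk b :=
    hunit.mul_left_cancel <| PowerSeries.ext fun m => by rw [hcoeff, hcoeff, h]
  funext m
  simpa using congrArg (PowerSeries.coeff m) hmk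

lemma coeff_coeff_C_mul_map_C {R : Type*} [Semiring R] (q p : R[X]) (m n : ℕ) :
    ((C q * p.map C).coeff m).coeff n = q.coeff n * p.coeff m := by
  rw [coeff_C_mul, coeff_map, coeff_mul_C]

namespace SumIdentity

def lhsSum (l m n : ℕ) : ℤ :=
  ∑ k ∈ range (l + 1),
    (-1 : ℤ) ^ ((m : ℤ) - k).natAbs * (l.choose k : ℤ) * Ring.choose ((m : ℤ) - k) n *
      zbinom (2 * k) ((k : ℤ) - 2 * l + m)

def rhsSum (l m n : ℕ) : ℤ :=
  ∑ k ∈ range (l + 1),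
    (l.choose k : ℤ) * ((2 * k).choose n : ℤ) * zbinom ((n : ℤ) - l) ((m : ℤ) + n - 3 * k - l)

def convSum (l m n : ℕ) : ℤ :=
  ∑ k ∈ range (l + 1), (l.choose k : ℤ) * ((2 * k).choose n : ℤ) *
    zbinom n ((m : ℤ) + n - 3 * k - l)

/- In `ℤ[X][X]` the outer variable `X` plays the role of `x` (exponent `m`) and `C X` that of
`y` (exponent `n`), so `(p.coeff m).coeff n` is the coefficient of `xᵐ yⁿ`. -/
noncomputable def lhsPoly (l : ℕ) : ℤ[X][X] :=
  X ^ l * ((1 - X * (1 + C X)) ^ 2 + X * (1 + C X) ^ 2) ^ l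

noncomputable def convPoly (l : ℕ) : ℤ[X][X] :=
  X ^ l * (1 + X * (C X * (1 + X) + X) ^ 2) ^ l

lemma one_add_X_pow_mul_lhsPoly (l : ℕ) : (1 + X) ^ l * lhsPoly l = convPoly l := by
  rw [lhsPoly, convPoly, mul_left_comm, ← mul_pow]
  ring

lemma lhsPoly_eq_sum (l : ℕ) : lhsPoly l = ∑ k ∈ range (l + 1), ∑ i ∈ range (2 * k + 1),
    C (C ((2 * k).choose i * ((-1) ^ i * l.choose k) : ℤ) * (1 + X) ^ (2 * (l - k) + i)) *
      X ^ (2 * l - k + i) := by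
  rw [lhsPoly, add_pow, mul_sum]
  refine sum_congr rfl fun k hk => ?_
  obtain ⟨a, rfl⟩ : ∃ a, l = k + a := ⟨l - k, by simp at hk; omega⟩
  rw [← pow_mul, sub_eq_neg_add, add_pow, sum_mul, sum_mul, mul_sum]
  refine sum_congr rfl fun i _ => ?_
  rw [show 2 * (k + a) - k + i = k + 2 * a + i by omega, show k + a - k = a by omega,
    neg_pow (X * (1 + C X) : ℤ[X][X]), mul_pow X, mul_pow X, ← pow_mul]
  simp only [map_mul, map_pow, map_add, map_one, map_neg, map_natCast]
  ring

lemma convPoly_eq_sum (l : ℕ) : convPoly l = ∑ k ∈ range (l + 1), ∑ j ∈ range (2 * k + 1),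
    C (C ((l.choose k * (2 * k).choose j : ℕ) : ℤ) * X ^ j) *
      (X ^ (l + k + (2 * k - j)) * (1 + X) ^ j : ℤ[X]).map C := by
  rw [convPoly, add_comm, add_pow, mul_sum]
  refine sum_congr rfl fun k _ => ?_
  rw [mul_pow, ← pow_mul, add_pow]
  simp only [mul_sum, sum_mul]
  refine sum_congr rfl fun j _ => ?_
  simp only [mul_pow, map_mul, map_pow, map_natCast, Polynomial.map_mul, Polynomial.map_pow,
    Polynomial.map_add, Polynomial.map_one, map_X, one_pow, mul_one, Nat.cast_mul]
  ring

lemma coeff_coeff_lhsPoly (l m n : ℕ) : ((lhsPoly l).coeff m).coeff n = lhsSum l m n := by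
  rw [lhsPoly_eq_sum, lhsSum]
  simp only [finsetSum_coeff, coeff_C_mul_X_pow]
  simp only [apply_ite (fun p : ℤ[X] => p.coeff n), coeff_zero, coeff_C_mul, coeff_one_add_X_pow,
    mul_assoc, sum_range_ite_choose_mul]
  refine sum_congr rfl fun k hk => ?_
  have hkl : k ≤ l := by simp at hk; omega
  rw [show ((m : ℤ) - (2 * l - k : ℕ)) = (k : ℤ) - 2 * l + m by omega]
  rcases lt_or_ge (m + k) (2 * l) with h | h
  · simp [zbinom_of_neg _ (by omega : (k : ℤ) - 2 * l + m < 0)]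
  · set i := m - (2 * l - k)
    have hmk : m - k = 2 * (l - k) + i := by omega
    rw [show ((m : ℤ) - k).natAbs = m - k by omega, show (m : ℤ) - k = (m - k : ℕ) by omega,
      Ring.choose_natCast, hmk, pow_add, pow_mul, neg_one_sq, one_pow, one_mul]
    push_cast
    ring

lemma coeff_coeff_convPoly (l m n : ℕ) : ((convPoly l).coeff m).coeff n = convSum l m n := by
  rw [convPoly_eq_sum, convSum]
  simp only [finsetSum_coeff, coeff_coeff_C_mul_map_C]
  simp only [coeff_C_mul, coeff_X_pow, coeff_X_pow_mul_one_add_X_pow, mul_ite, mul_one, mul_zero,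
    ite_mul, zero_mul, sum_ite_eq, mem_range]
  refine sum_congr rfl fun k _ => ?_
  split_ifs with hn
  · push_cast
    congr 2
    omega
  · rw [Nat.choose_eq_zero_of_lt (show 2 * k < n by omega)]
    simp

lemma sum_antidiagonal_choose_mul_lhsSum (l m n : ℕ) :
    ∑ p ∈ antidiagonal m, (l.choose p.1 : ℤ) * lhsSum l p.2 n = convSum l m n := by
  rw [← coeff_coeff_convPoly, ← one_add_X_pow_mul_lhsPoly, coeff_mul, finsetSum_coeff]
  refine sum_congr rfl fun p _ => ?_
  rw [coeff_one_add_X_pow, coeff_natCast_mul, coeff_coeff_lhsPoly]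

lemma sum_antidiagonal_choose_mul_rhsSum (l m n : ℕ) :
    ∑ p ∈ antidiagonal m, (l.choose p.1 : ℤ) * rhsSum l p.2 n = convSum l m n := by
  simp only [rhsSum, convSum, mul_sum]
  rw [sum_comm]
  refine sum_congr rfl fun k _ => ?_
  rcases le_or_gt n (2 * k) with hn | hn
  · rw [show (m : ℤ) + n - 3 * k - l = m - (3 * k + l - n) by ring,
      ← sum_antidiagonal_choose_mul_zbinom l m n _ (by omega), mul_sum]
    refine sum_congr rfl fun p _ => ?_
    rw [show (p.2 : ℤ) + n - 3 * k - l = p.2 - (3 * k + l - n) by ring]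
    ring
  · simp [Nat.choose_eq_zero_of_lt hn]

end SumIdentity

theorem sum_identity (l m n : ℕ) :
    ∑ k ∈ Finset.range (l + 1),
      (-1 : ℤ) ^ ((m : ℤ) - k).natAbs * (l.choose k : ℤ) * Ring.choose ((m : ℤ) - k) n *
        zbinom (2 * k) ((k : ℤ) - 2 * l + m)
    = ∑ k ∈ Finset.range (l + 1),
        (l.choose k : ℤ) * ((2 * k).choose n : ℤ) *
          zbinom ((n : ℤ) - l) ((m : ℤ) + n - 3 * k - l) := by
  have h := eq_of_sum_antidiagonal_choose_mul_eq l (a := fun m => SumIdentity.lhsSum l m n)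
    (b := fun m => SumIdentity.rhsSum l m n) fun m =>
      (SumIdentity.sum_antidiagonal_choose_mul_lhsSum l m n).trans
        (SumIdentity.sum_antidiagonal_choose_mul_rhsSum l m n).symm
  exact congrFun h m
end

section
/- For all natural numbers l and m, ∑_{k=0}^{l} (−1)^{m−k} · binom(l,k) · binom(m−k, l) · binom(2k, k−2l+m) = [3∣m] · binom(l, ⌈m/3⌉) · binom(2⌈m/3⌉, l). In particular, the left-hand side equals binom(2m/3, m/3) · binom(m/3, l−m/3) if 3 divides m, and equals 0 otherwise. -/
/-!
Work in `ℤ[q][y]`, realised as `ℤ[X][X]` with `q = C X` and `y = X`. The left-hand side is the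
coefficient of `q ^ m * y ^ l` in `F ^ l`, where `F = q (1 - q (1 + y)) ^ 2 + (q (1 + y)) ^ 2`,
and `[3 ∣ m] binom(l, m/3) binom(2m/3, l)` is the same coefficient of `G ^ l`, where
`G = 1 + q ^ 3 (1 + y) ^ 2`. As polynomials in `y`, both `F` and `G` are quadratics
`a + b y + c y ^ 2` with the same `b = 2 q ^ 3` and the same product `a c = q ^ 3 (1 + q ^ 3)`.
Since the coefficient of `y ^ l` in `(a + b y + c y ^ 2) ^ l` only involves `b` and `a c`, the
two coefficients agree.
-/

open Polynomial Finset

section CentralCoefficient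

variable {R : Type*} [CommRing R]

lemma coeff_C_add_C_mul_X_sq_pow_self (a c : R) (k : ℕ) :
    ((C a + C c * X ^ 2) ^ k).coeff k =
      if Even k then k.choose (k / 2) * (a * c) ^ (k / 2) else 0 := by
  have hexp : (C a + C c * X ^ 2) ^ k =
      ∑ j ∈ range (k + 1), C (c ^ j * a ^ (k - j) * k.choose j) * X ^ (2 * j) := by
    rw [add_comm, add_pow]
    refine sum_congr rfl fun j _ => ?_
    simp only [map_mul, map_pow, map_natCast]
    ring
  simp only [hexp, finsetSum_coeff, coeff_C_mul_X_pow]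
  split_ifs with hk
  · obtain ⟨t, rfl⟩ := hk
    rw [sum_eq_single t]
    · rw [if_pos (two_mul t).symm, Nat.add_sub_cancel, ← two_mul,
        Nat.mul_div_cancel_left t two_pos]
      ring
    · intro j _ hj; exact if_neg (by omega)
    · intro ht; exact absurd (mem_range.2 (by omega)) ht
  · exact sum_eq_zero fun j _ => if_neg (by rintro rfl; exact hk ⟨j, by ring⟩)

lemma coeff_quadratic_pow_self (a b c : R) (n : ℕ) :
    ((C a + C b * X + C c * X ^ 2) ^ n).coeff n = ∑ k ∈ range (n + 1),
      n.choose k * b ^ (n - k) * if Even k then k.choose (k / 2) * (a * c) ^ (k / 2) else 0 := by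
  rw [add_right_comm, add_pow, finsetSum_coeff]
  refine sum_congr rfl fun k hk => ?_
  have hterm : (C a + C c * X ^ 2) ^ k * (C b * X) ^ (n - k) * (n.choose k : R[X]) =
      C (n.choose k * b ^ (n - k)) * ((C a + C c * X ^ 2) ^ k * X ^ (n - k)) := by
    simp only [map_mul, map_pow, map_natCast]
    ring
  rw [hterm, coeff_C_mul, coeff_mul_X_pow', if_pos (by omega), Nat.sub_sub_self (by grind),
    coeff_C_add_C_mul_X_sq_pow_self, mul_assoc]

lemma coeff_quadratic_pow_self_congr {a a' c c' : R} (b : R) (n : ℕ) (h : a * c = a' * c') :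
    ((C a + C b * X + C c * X ^ 2) ^ n).coeff n =
      ((C a' + C b * X + C c' * X ^ 2) ^ n).coeff n := by
  simp only [coeff_quadratic_pow_self, h]

end CentralCoefficient

lemma zbinom_natCast_eq_sum (n : ℕ) (i : ℤ) :
    zbinom n i = ∑ j ∈ range (n + 1), if (j : ℤ) = i then (n.choose j : ℤ) else 0 := by
  unfold zbinom
  split_ifs with hi
  · lift i to ℕ using hi
    simp only [Int.toNat_natCast, Ring.choose_natCast, Nat.cast_inj, sum_ite_eq', mem_range]
    split_ifs with hin
    · rfl
    · rw [Nat.choose_eq_zero_of_lt (by omega), Nat.cast_zero]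
  · exact (sum_eq_zero fun j _ => if_neg (by omega)).symm

lemma choose_mul_choose_two_mul_eq_zbinom (l t : ℕ) :
    (l.choose t * (2 * t).choose l : ℤ) = (2 * t).choose t * zbinom t ((l : ℤ) - t) := by
  rcases lt_or_ge l t with hlt | htl
  · rw [Nat.choose_eq_zero_of_lt hlt, zbinom, if_neg (by omega)]
    simp
  · have h := Nat.choose_mul (n := 2 * t) htl
    rw [show 2 * t - t = t by omega] at h
    rw [zbinom, if_pos (by omega), ← Nat.cast_sub htl, Int.toNat_natCast, Ring.choose_natCast]
    exact_mod_cast (mul_comm _ _).trans h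

lemma ceil_natCast_div_eq {K : Type*} [Semifield K] [LinearOrder K] [IsStrictOrderedRing K]
    [FloorSemiring K] {m d : ℕ} (h : d ∣ m) : ⌈(m : K) / d⌉₊ = m / d := by
  rw [← Nat.cast_div_charZero h, Nat.ceil_natCast]

lemma coeff_coeff_C_mul_one_add_X_pow {R : Type*} [CommSemiring R] (r : R) (e d l m : ℕ) :
    ((C (C r * X ^ e) * (1 + X) ^ d : R[X][X]).coeff l).coeff m =
      if m = e then r * d.choose l else 0 := by
  rw [coeff_C_mul, coeff_one_add_X_pow, ← C_eq_natCast, mul_right_comm, ← C_mul,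
    coeff_C_mul_X_pow]

namespace Guo

def lhsSum (l m : ℕ) : ℤ :=
  ∑ k ∈ range (l + 1),
    (-1 : ℤ) ^ ((m : ℤ) - k).natAbs * (l.choose k : ℤ) * Ring.choose ((m : ℤ) - k) l *
      zbinom (2 * k) ((k : ℤ) - 2 * l + m)

noncomputable def leftGen : ℤ[X][X] := C X * (1 - C X * (1 + X)) ^ 2 + (C X * (1 + X)) ^ 2

noncomputable def rightGen : ℤ[X][X] := 1 + C (X ^ 3) * (1 + X) ^ 2

lemma leftGen_pow (l : ℕ) : leftGen ^ l =
    ∑ k ∈ range (l + 1), ∑ j ∈ range (2 * k + 1),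
      C (C ((-1) ^ j * l.choose k * (2 * k).choose j : ℤ) * X ^ (k + j + 2 * (l - k))) *
        (1 + X) ^ (j + 2 * (l - k)) := by
  rw [leftGen, add_pow]
  refine sum_congr rfl fun k _ => ?_
  rw [mul_pow, ← pow_mul, sub_eq_neg_add, add_pow, mul_sum, sum_mul, sum_mul]
  refine sum_congr rfl fun j _ => ?_
  rw [neg_pow (C X * (1 + X) : ℤ[X][X]), one_pow, mul_one, ← pow_mul, mul_pow, mul_pow]
  simp only [map_mul, map_pow, map_neg, map_one, map_natCast, pow_add]
  ring

lemma rightGen_pow (l : ℕ) : rightGen ^ l =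
    ∑ t ∈ range (l + 1), C (C (l.choose t : ℤ) * X ^ (3 * t)) * (1 + X) ^ (2 * t) := by
  rw [rightGen, add_comm, add_pow]
  refine sum_congr rfl fun t _ => ?_
  simp only [mul_pow, ← pow_mul, map_mul, map_pow, map_natCast, one_pow]
  ring

lemma coeff_coeff_leftGen_pow (l m : ℕ) : ((leftGen ^ l).coeff l).coeff m = lhsSum l m := by
  simp only [leftGen_pow, finsetSum_coeff, coeff_coeff_C_mul_one_add_X_pow, lhsSum]
  refine sum_congr rfl fun k hk => ?_
  have hkl : k ≤ l := Nat.lt_succ_iff.mp (mem_range.mp hk)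
  rw [show (2 * k : ℤ) = ((2 * k : ℕ) : ℤ) by push_cast; ring, zbinom_natCast_eq_sum, mul_sum]
  refine sum_congr rfl fun j _ => ?_
  by_cases hm : m = k + j + 2 * (l - k)
  · subst hm
    have hmk : ((k + j + 2 * (l - k) : ℕ) : ℤ) - k = ((j + 2 * (l - k) : ℕ) : ℤ) := by
      push_cast; ring
    rw [if_pos rfl, if_pos (by push_cast [Nat.cast_sub hkl]; ring), hmk, Int.natAbs_natCast,
      Ring.choose_natCast, pow_add, pow_mul, neg_one_sq, one_pow, mul_one]
    ring
  · rw [if_neg hm, if_neg (by omega), mul_zero]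

lemma coeff_coeff_rightGen_pow (l m : ℕ) : ((rightGen ^ l).coeff l).coeff m =
    if 3 ∣ m then (l.choose (m / 3) * (2 * (m / 3)).choose l : ℤ) else 0 := by
  simp only [rightGen_pow, finsetSum_coeff, coeff_coeff_C_mul_one_add_X_pow]
  split_ifs with h3
  · obtain ⟨s, rfl⟩ := h3
    simp only [Nat.mul_right_inj (by norm_num : 3 ≠ 0), sum_ite_eq, mem_range,
      Nat.mul_div_cancel_left s (by norm_num : 0 < 3)]
    split_ifs with hs
    · rfl
    · rw [Nat.choose_eq_zero_of_lt (by omega), Nat.cast_zero, zero_mul]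
  · exact sum_eq_zero fun t _ => if_neg fun h => h3 ⟨t, h⟩

lemma coeff_leftGen_pow_self (l : ℕ) : (leftGen ^ l).coeff l = (rightGen ^ l).coeff l := by
  have hleft :
      leftGen = C (X - X ^ 2 + X ^ 3) + C (2 * X ^ 3) * X + C (X ^ 2 + X ^ 3) * X ^ 2 := by
    simp only [leftGen, map_add, map_sub, map_mul, map_pow, map_ofNat]
    ring
  have hright : rightGen = C (1 + X ^ 3) + C (2 * X ^ 3) * X + C (X ^ 3) * X ^ 2 := by
    simp only [rightGen, map_add, map_mul, map_pow, map_one, map_ofNat]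
    ring
  rw [hleft, hright]
  exact coeff_quadratic_pow_self_congr _ _ (by ring)

end Guo

theorem guo_conjecture (l m : ℕ) :
    (∑ k ∈ Finset.range (l + 1),
      (-1 : ℤ) ^ ((m : ℤ) - k).natAbs * (l.choose k : ℤ) * Ring.choose ((m : ℤ) - k) l *
        zbinom (2 * k) ((k : ℤ) - 2 * l + m)
      = (if 3 ∣ m then 1 else 0) * (l.choose ⌈(m : ℚ) / 3⌉₊ : ℤ) *
          ((2 * ⌈(m : ℚ) / 3⌉₊).choose l : ℤ))
    ∧ ∑ k ∈ Finset.range (l + 1),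
        (-1 : ℤ) ^ ((m : ℤ) - k).natAbs * (l.choose k : ℤ) * Ring.choose ((m : ℤ) - k) l *
          zbinom (2 * k) ((k : ℤ) - 2 * l + m)
      = (if 3 ∣ m then
          ((2 * (m / 3)).choose (m / 3) : ℤ) * zbinom ((m / 3 : ℕ) : ℤ) ((l : ℤ) - (m / 3 : ℕ))
        else 0) := by
  have key : Guo.lhsSum l m =
      if 3 ∣ m then (l.choose (m / 3) * (2 * (m / 3)).choose l : ℤ) else 0 := by
    rw [← Guo.coeff_coeff_leftGen_pow, Guo.coeff_leftGen_pow_self,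
      Guo.coeff_coeff_rightGen_pow]
  refine ⟨key.trans ?_, key.trans ?_⟩ <;> split_ifs with h3
  · have hceil : ⌈(m : ℚ) / 3⌉₊ = m / 3 := ceil_natCast_div_eq (d := 3) h3
    rw [one_mul, hceil]
  · rw [zero_mul, zero_mul]
  · exact choose_mul_choose_two_mul_eq_zbinom l (m / 3)
  · rfl
end

section
/- For all natural numbers l and m, ∑_{k=0}^{l} (−1)^{m−k} · binom(l,k) · binom(m−k, l+2) · binom(2k, k−2l+m) = (1 + [3∣m+1]) · binom(l, ⌈m/3⌉) · binom(2⌈m/3⌉, l+2). -/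
open Polynomial Finset

theorem Nat.ceil_natCast_div_natCast {K : Type*} [Field K] [LinearOrder K] [IsStrictOrderedRing K]
    [FloorSemiring K] (n d : ℕ) : ⌈(n / d : K)⌉₊ = (n + d - 1) / d := by
  rcases Nat.eq_zero_or_pos d with rfl | hd
  · simp
  refine eq_of_forall_ge_iff fun q => ?_
  rw [Nat.ceil_le, div_le_iff₀ (by exact_mod_cast hd), Nat.div_le_iff_le_mul_add_pred hd]
  norm_cast
  rw [mul_comm]
  omega

theorem Polynomial.coeff_one_add_C_mul_X_pow {R : Type*} [CommSemiring R] (b : R) (N n : ℕ) :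
    ((1 + C b * X) ^ N).coeff n = N.choose n * b ^ n := by
  have : (1 + C b * X) ^ N = ((1 + X) ^ N).comp (C b * X) := by simp [add_comp]
  rw [this, comp_C_mul_X_coeff, coeff_one_add_X_pow]

section Factors

variable {A : Type*} [CommRing A]

def leftFactor (x u : A) : A := (1 - x * u) ^ 2 + x * u ^ 2

def rightFactor (x v : A) : A := 1 + x ^ 3 * v ^ 2

theorem one_add_mul_leftFactor (x y : A) :
    (1 + x) * leftFactor x (1 + x * y) = rightFactor x (1 + (1 + x) * y) := by
  unfold leftFactor rightFactor
  ring

theorem leftFactor_pow_mul_pow (x u : A) (l : ℕ) :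
    leftFactor x u ^ l * x ^ l =
      ∑ k ∈ range (l + 1), ∑ j ∈ range (2 * k + 1),
        ((-1) ^ j * l.choose k * (2 * k).choose j : A) * x ^ (2 * l - k + j) *
          u ^ (2 * (l - k) + j) := by
  rw [leftFactor, add_pow, sum_mul]
  refine sum_congr rfl fun k hk => ?_
  obtain ⟨d, rfl⟩ : ∃ d, l = k + d := ⟨l - k, by grind⟩
  rw [← pow_mul, sub_eq_neg_add, add_pow, sum_mul, sum_mul, sum_mul]
  refine sum_congr rfl fun j _ => ?_
  rw [show 2 * (k + d) - k + j = k + 2 * d + j by omega, show k + d - k = d by omega, neg_pow]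
  ring

theorem rightFactor_pow (x v : A) (l : ℕ) :
    rightFactor x v ^ l =
      ∑ c ∈ range (l + 1), (l.choose c : A) * x ^ (3 * c) * v ^ (2 * c) := by
  rw [rightFactor, add_comm, add_pow]
  refine sum_congr rfl fun c _ => ?_
  ring

end Factors

noncomputable def lhsPoly (l n : ℕ) : ℤ[X] :=
  ∑ k ∈ range (l + 1), ∑ j ∈ range (2 * k + 1),
    C ((-1) ^ j * l.choose k * (2 * k).choose j * (2 * (l - k) + j).choose n : ℤ) *
      X ^ (2 * l - k + j)

noncomputable def rhsPoly (l n : ℕ) : ℤ[X] :=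
  ∑ c ∈ range (l + 1), C (l.choose c * (2 * c).choose n : ℤ) * X ^ (3 * c)

theorem coeff_leftFactor_pow_mul_pow (b : ℤ[X]) (l n : ℕ) :
    (leftFactor (C X : ℤ[X][X]) (1 + C b * X) ^ l * C X ^ l).coeff n = lhsPoly l n * b ^ n := by
  simp only [leftFactor_pow_mul_pow, lhsPoly, finsetSum_coeff, sum_mul]
  refine sum_congr rfl fun k _ => sum_congr rfl fun j _ => ?_
  have hC : ((-1) ^ j * l.choose k * (2 * k).choose j : ℤ[X][X]) * C X ^ (2 * l - k + j) =
      C ((((-1) ^ j * l.choose k * (2 * k).choose j : ℤ) : ℤ[X]) * X ^ (2 * l - k + j)) := by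
    simp
  rw [hC, coeff_C_mul, coeff_one_add_C_mul_X_pow, eq_intCast]
  push_cast
  ring

theorem coeff_rightFactor_pow (b : ℤ[X]) (l n : ℕ) :
    (rightFactor (C X : ℤ[X][X]) (1 + C b * X) ^ l).coeff n = rhsPoly l n * b ^ n := by
  simp only [rightFactor_pow, rhsPoly, finsetSum_coeff, sum_mul]
  refine sum_congr rfl fun c _ => ?_
  have hC : (l.choose c : ℤ[X][X]) * C X ^ (3 * c) = C ((l.choose c : ℤ[X]) * X ^ (3 * c)) := by
    simp
  rw [hC, coeff_C_mul, coeff_one_add_C_mul_X_pow, eq_intCast]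
  push_cast
  ring

theorem one_add_X_pow_mul_X_pow_mul_lhsPoly (l n : ℕ) :
    (1 + X) ^ l * X ^ n * lhsPoly l n = (1 + X) ^ n * X ^ l * rhsPoly l n := by
  have h := congrArg (fun p => (p ^ l * C X ^ l).coeff n)
    (one_add_mul_leftFactor (C X : ℤ[X][X]) X)
  simp only [show (1 + C X : ℤ[X][X]) = C (1 + X) by simp] at h
  rw [mul_pow, mul_assoc, ← C_pow, coeff_C_mul, coeff_leftFactor_pow_mul_pow, ← C_pow,
    coeff_mul_C, coeff_rightFactor_pow] at h
  linear_combination h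

theorem X_sq_mul_lhsPoly (l : ℕ) : X ^ 2 * lhsPoly l (l + 2) = (1 + X) ^ 2 * rhsPoly l (l + 2) := by
  have hne : ((1 + X) ^ l * X ^ l : ℤ[X]) ≠ 0 :=
    mul_ne_zero (pow_ne_zero _ (by simpa [add_comm] using X_add_C_ne_zero (1 : ℤ)))
      (pow_ne_zero _ X_ne_zero)
  apply mul_left_cancel₀ hne
  linear_combination one_add_X_pow_mul_X_pow_mul_lhsPoly l (l + 2)

theorem coeff_lhsPoly (l n m : ℕ) :
    (lhsPoly l n).coeff m = ∑ k ∈ range (l + 1), if 2 * l ≤ m + k then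
      (-1 : ℤ) ^ (m + k) * l.choose k * (2 * k).choose (m + k - 2 * l) * (m - k).choose n
      else 0 := by
  simp only [lhsPoly, finsetSum_coeff, coeff_C_mul_X_pow]
  refine sum_congr rfl fun k hk => ?_
  have hkl : k ≤ l := by grind
  split_ifs with h
  · have hsign : (-1 : ℤ) ^ (m + k - 2 * l) = (-1) ^ (m + k) :=
      neg_one_pow_congr (by simp only [Nat.even_iff]; omega)
    rw [sum_eq_single (m + k - 2 * l), if_pos (by omega), hsign,
      show 2 * (l - k) + (m + k - 2 * l) = m - k by omega]
    · exact fun j _ hj => if_neg (by omega)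
    · intro hj
      rw [Nat.choose_eq_zero_of_lt (show 2 * k < m + k - 2 * l by rw [mem_range] at hj; omega)]
      simp
  · exact sum_eq_zero fun j _ => if_neg (by omega)

theorem coeff_one_add_X_sq_mul_X_pow_three_mul {R : Type*} [Semiring R] (c m : ℕ) :
    ((1 + X) ^ 2 * X ^ (3 * c) : R[X]).coeff (m + 2) =
      if c = (m + 2) / 3 then 1 + if 3 ∣ m + 1 then 1 else 0 else 0 := by
  rw [coeff_mul_X_pow', coeff_one_add_X_pow]
  obtain h | h | h | h : m + 2 - 3 * c = 0 ∨ m + 2 - 3 * c = 1 ∨ m + 2 - 3 * c = 2 ∨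
      2 < m + 2 - 3 * c := by omega
  all_goals first | rw [h] | rw [Nat.choose_eq_zero_of_lt h]
  all_goals split_ifs <;> first | omega | norm_num

theorem coeff_one_add_X_sq_mul_rhsPoly (l n m : ℕ) :
    ((1 + X) ^ 2 * rhsPoly l n).coeff (m + 2) =
      (1 + if 3 ∣ m + 1 then 1 else 0 : ℤ) * l.choose ((m + 2) / 3) *
        (2 * ((m + 2) / 3)).choose n := by
  simp only [rhsPoly, mul_sum, finsetSum_coeff, mul_left_comm _ (C _), coeff_C_mul,
    coeff_one_add_X_sq_mul_X_pow_three_mul, mul_ite, mul_zero]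
  rw [sum_ite_eq']
  by_cases h : (m + 2) / 3 ∈ range (l + 1)
  · rw [if_pos h]
    ring
  · rw [if_neg h, Nat.choose_eq_zero_of_lt (by grind)]
    simp

theorem neg_one_pow_natAbs_mul_ringChoose_mul_zbinom (l m k n : ℕ) (hk : k ≤ l) :
    (-1 : ℤ) ^ ((m : ℤ) - k).natAbs * (l.choose k : ℤ) * Ring.choose ((m : ℤ) - k) n *
        zbinom (2 * k) ((k : ℤ) - 2 * l + m) =
      if 2 * l ≤ m + k then
        (-1 : ℤ) ^ (m + k) * l.choose k * (2 * k).choose (m + k - 2 * l) * (m - k).choose n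
      else 0 := by
  split_ifs with h
  · have hmk : ((m : ℤ) - k) = ((m - k : ℕ) : ℤ) := by omega
    have hj : (k : ℤ) - 2 * l + m = ((m + k - 2 * l : ℕ) : ℤ) := by omega
    rw [hmk, hj, zbinom, if_pos (by positivity), Int.toNat_natCast, Int.natAbs_natCast,
      Ring.choose_natCast, show (2 * k : ℤ) = ((2 * k : ℕ) : ℤ) by push_cast; rfl,
      Ring.choose_natCast, neg_one_pow_congr (m := m - k) (n := m + k)
        (by simp only [Nat.even_iff]; omega)]
    ring
  · rw [zbinom, if_neg (by omega), mul_zero]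

theorem corollary_1_1_second (l m : ℕ) :
    ∑ k ∈ Finset.range (l + 1),
      (-1 : ℤ) ^ ((m : ℤ) - k).natAbs * (l.choose k : ℤ) * Ring.choose ((m : ℤ) - k) (l + 2) *
        zbinom (2 * k) ((k : ℤ) - 2 * l + m)
    = (1 + (if (3 : ℤ) ∣ ((m : ℤ) + 1) then 1 else 0)) * (l.choose ⌈(m : ℚ) / 3⌉₊ : ℤ) *
        ((2 * ⌈(m : ℚ) / 3⌉₊).choose (l + 2) : ℤ) := by
  have hceil : ⌈(m : ℚ) / 3⌉₊ = (m + 2) / 3 := by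
    simpa using Nat.ceil_natCast_div_natCast (K := ℚ) m 3
  have hdvd : (3 : ℤ) ∣ (m : ℤ) + 1 ↔ 3 ∣ m + 1 := by omega
  simp only [hceil, hdvd]
  rw [← coeff_one_add_X_sq_mul_rhsPoly, ← X_sq_mul_lhsPoly, coeff_X_pow_mul, coeff_lhsPoly]
  exact sum_congr rfl fun k hk =>
    neg_one_pow_natAbs_mul_ringChoose_mul_zbinom l m k _ (by grind)
end

section
/- Let p be a prime and let d be an integer with 0 ≤ d ≤ p. Then ∑_{k=0}^{p−1} binom(2k, k+d) ≡ ((p−d)/3) (mod p). -/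
/-!
Write `S d = ∑_{k<p} C(2k, k+d)`. Applying Pascal's rule twice gives
`C(2k,k+d) + 2 C(2k,k+d+1) + C(2k,k+d+2) = C(2k+2,k+d+2)`, and summing over `k < p` telescopes to
`S d + S (d+1) + S (d+2) = C(2p, p+d+1)`, which vanishes mod `p` by Lucas' theorem when
`d + 2 ≤ p`.
So `S (p - j)` satisfies the recursion `x_{j+2} ≡ -x_{j+1} - x_j` of `(j/3)`, and agrees with it
for `j = 0, 1` since `S p = 0` and `S (p-1) = 1`.
-/

/-- `chi3 a` is the Legendre symbol `(a/3)`: the unique element of `{0, 1, -1}`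
congruent to `a` modulo `3`. -/
def chi3 (a : ℤ) : ℤ := if a % 3 = 0 then 0 else if a % 3 = 1 then 1 else -1

lemma chi3_add_chi3_add_chi3 (n : ℤ) : chi3 n + chi3 (n + 1) + chi3 (n + 2) = 0 := by
  unfold chi3
  split_ifs <;> omega

lemma Nat.Prime.dvd_choose_mul_of_not_dvd {p : ℕ} (hp : p.Prime) (m : ℕ) {k : ℕ}
    (hk : ¬p ∣ k) :
    p ∣ (m * p).choose k := by
  have := Fact.mk hp
  have hlucas := Choose.choose_modEq_choose_mod_mul_choose_div_nat (p := p) (n := m * p) (k := k)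
  have hk' : 0 < k % p := Nat.pos_of_ne_zero (mt Nat.dvd_of_mod_eq_zero hk)
  rw [Nat.mul_mod_left, Nat.choose_eq_zero_of_lt hk', zero_mul] at hlucas
  exact Nat.modEq_zero_iff_dvd.mp hlucas

lemma choose_two_mul_add_two_mul_choose_add_choose (k d : ℕ) :
    (2 * k).choose (k + d) + 2 * (2 * k).choose (k + d + 1) + (2 * k).choose (k + d + 2) =
      (2 * (k + 1)).choose (k + 1 + d + 1) := by
  rw [show 2 * (k + 1) = 2 * k + 1 + 1 by ring, show k + 1 + d + 1 = k + d + 1 + 1 by ring,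
    Nat.choose_succ_succ, Nat.choose_succ_succ, Nat.choose_succ_succ]
  ring

def centralBinomShiftSum (n d : ℕ) : ℕ := ∑ k ∈ Finset.range n, (2 * k).choose (k + d)

lemma centralBinomShiftSum_succ (n d : ℕ) :
    centralBinomShiftSum (n + 1) d = centralBinomShiftSum n d + (2 * n).choose (n + d) :=
  Finset.sum_range_succ _ _

lemma centralBinomShiftSum_of_le {n d : ℕ} (h : n ≤ d) : centralBinomShiftSum n d = 0 :=
  Finset.sum_eq_zero fun k hk =>
    Nat.choose_eq_zero_of_lt (by rw [Finset.mem_range] at hk; omega)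

lemma centralBinomShiftSum_succ_self (n : ℕ) : centralBinomShiftSum (n + 1) n = 1 := by
  rw [centralBinomShiftSum_succ, centralBinomShiftSum_of_le le_rfl, ← two_mul, Nat.choose_self]

lemma centralBinomShiftSum_add_add (n d : ℕ) :
    centralBinomShiftSum n d + centralBinomShiftSum n (d + 1) + centralBinomShiftSum n (d + 2) =
      (2 * n).choose (n + d + 1) := by
  induction n with
  | zero => simp [centralBinomShiftSum]
  | succ n ih =>
    rw [← choose_two_mul_add_two_mul_choose_add_choose]
    simp only [centralBinomShiftSum_succ, ← add_assoc]
    omega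

lemma Nat.Prime.dvd_centralBinomShiftSum_add_add {p d : ℕ} (hp : p.Prime) (hd : d + 1 < p) :
    p ∣ centralBinomShiftSum p d + centralBinomShiftSum p (d + 1) +
      centralBinomShiftSum p (d + 2) := by
  rw [centralBinomShiftSum_add_add]
  refine hp.dvd_choose_mul_of_not_dvd 2 fun h => ?_
  rw [add_assoc, Nat.dvd_add_right dvd_rfl] at h
  exact absurd (Nat.le_of_dvd d.succ_pos h) (by omega)

lemma centralBinomShiftSum_sub_modEq_chi3 {p : ℕ} (hp : p.Prime) {j : ℕ} (hj : j ≤ p) :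
    (centralBinomShiftSum p (p - j) : ℤ) ≡ chi3 j [ZMOD p] := by
  induction j using Nat.twoStepInduction with
  | zero => simp [centralBinomShiftSum_of_le, chi3]
  | one =>
    obtain ⟨n, rfl⟩ := Nat.exists_eq_add_of_lt hj
    simp [centralBinomShiftSum_succ_self, chi3]
  | more j ih₀ ih₁ =>
    set d := p - (j + 2)
    rw [show p - (j + 1) = d + 1 by omega] at ih₁
    rw [show p - j = d + 2 by omega] at ih₀
    have hdvd : (p : ℤ) ∣ centralBinomShiftSum p d + centralBinomShiftSum p (d + 1) +
        centralBinomShiftSum p (d + 2) := by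
      exact_mod_cast hp.dvd_centralBinomShiftSum_add_add (by omega)
    have hrec : (centralBinomShiftSum p d : ℤ) ≡
        -centralBinomShiftSum p (d + 1) - centralBinomShiftSum p (d + 2) [ZMOD p] :=
      Int.modEq_iff_dvd.mpr (by rw [← Int.dvd_neg]; convert hdvd using 1; ring)
    calc (centralBinomShiftSum p d : ℤ)
        ≡ -centralBinomShiftSum p (d + 1) - centralBinomShiftSum p (d + 2) [ZMOD p] := hrec
      _ ≡ -chi3 (j + 1 : ℕ) - chi3 j [ZMOD p] := (ih₁ (by omega)).neg.sub (ih₀ (by omega))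
      _ = chi3 (j + 2 : ℕ) := by
        push_cast
        linarith [chi3_add_chi3_add_chi3 j]

theorem sum_central_binom_shift (p : ℕ) (hp : p.Prime) (d : ℕ) (hd : d ≤ p) :
    (∑ k ∈ Finset.range p, ((2 * k).choose (k + d) : ℤ))
      ≡ chi3 ((p : ℤ) - d) [ZMOD (p : ℤ)] := by
  have h := centralBinomShiftSum_sub_modEq_chi3 hp (Nat.sub_le p d)
  rw [Nat.sub_sub_self hd, Nat.cast_sub hd] at h
  simpa [centralBinomShiftSum] using h
end

section
/- Let p be a prime and let d be an integer with 0 ≤ d ≤ p. Then 3 · ∑_{k=1}^{p−1} k · binom(2k, k+d) ≡ (3·[3∣p−d] − 1) · (2·((p−d)/3) − d) − 3·[p=3] (mod p). -/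
open Finset Polynomial

theorem sub_sq_mul_sum_range_mul_pow_mul_pow {R : Type*} [CommRing R] (x y : R) (n : ℕ) :
    (y - x) ^ 2 * ∑ k ∈ range n, (k : R) * x ^ k * y ^ (n - 1 - k)
      = x * y ^ n - n * (x ^ n * y) + (n - 1) * x ^ (n + 1) := by
  induction n with
  | zero => simp
  | succ n ih =>
    have shift : ∑ k ∈ range n, (k : R) * x ^ k * y ^ (n + 1 - 1 - k)
        = y * ∑ k ∈ range n, (k : R) * x ^ k * y ^ (n - 1 - k) := by
      rw [mul_sum]
      refine sum_congr rfl fun k hk => ?_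
      rw [show n + 1 - 1 - k = n - 1 - k + 1 by grind, pow_succ]
      ring
    rw [sum_range_succ, shift, show n + 1 - 1 - n = 0 by omega, Nat.cast_succ]
    linear_combination y * ih

noncomputable def weightedBinomPoly (R : Type*) [Semiring R] (n : ℕ) : R[X] :=
  ∑ k ∈ range n, (k : R[X]) * ((1 + X) ^ 2) ^ k * X ^ (n - 1 - k)

theorem coeff_weightedBinomPoly (R : Type*) [Semiring R] (n d : ℕ) :
    (weightedBinomPoly R n).coeff (n - 1 + d)
      = ∑ k ∈ range n, (k : R) * (2 * k).choose (k + d) := by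
  rw [weightedBinomPoly, finsetSum_coeff]
  refine sum_congr rfl fun k hk => ?_
  have hk : k < n := mem_range.mp hk
  rw [coeff_mul_X_pow', if_pos (by omega), show n - 1 + d - (n - 1 - k) = k + d by omega,
    ← pow_mul, mul_comm 2 k, ← C_eq_natCast, coeff_C_mul, coeff_one_add_X_pow]

theorem one_sub_X_pow_three_sq_mul_weightedBinomPoly {R : Type*} [CommRing R] (p : ℕ)
    [Fact p.Prime] [CharP R p] :
    (1 - X ^ 3) ^ 2 * weightedBinomPoly R p
      = -((1 - X ^ 2) ^ 2 * (1 + X ^ p + X ^ (2 * p))) := by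
  have frobenius : ((1 + X : R[X]) ^ 2) ^ (p + 1) = (1 + X ^ p) ^ 2 * (1 + X) ^ 2 := by
    rw [← pow_mul, show 2 * (p + 1) = p * 2 + 2 by ring, pow_add, pow_mul, add_pow_char, one_pow]
  have series_sum := sub_sq_mul_sum_range_mul_pow_mul_pow ((1 + X : R[X]) ^ 2) X p
  rw [CharP.cast_eq_zero, frobenius] at series_sum
  rw [weightedBinomPoly]
  linear_combination (1 - X : R[X]) ^ 2 * series_sum

/-- The coefficients of `((1 - X²) / (1 - X³))²`, extended to `ℤ` so that the value at `-1`
is `0`; this absorbs the case `d = 0` of `sum_range_mul_choose_eq_ratioSqCoeff`. -/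
def ratioSqCoeff (n : ℤ) : ℤ :=
  if n % 3 = 0 then n / 3 + 1 else if n % 3 = 1 then n / 3 else -2 * (n / 3 + 1)

theorem one_sub_X_pow_three_sq_mul_mk_ratioSqCoeff :
    ((1 : PowerSeries ℤ) - PowerSeries.X ^ 3) ^ 2 * PowerSeries.mk (fun n ↦ ratioSqCoeff n)
      = (1 - PowerSeries.X ^ 2) ^ 2 := by
  set S := PowerSeries.mk (fun n ↦ ratioSqCoeff n)
  have lhs : ((1 : PowerSeries ℤ) - PowerSeries.X ^ 3) ^ 2 * S
      = S - (S * PowerSeries.X ^ 3 + S * PowerSeries.X ^ 3) + S * PowerSeries.X ^ 6 := by ring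
  have rhs : ((1 : PowerSeries ℤ) - PowerSeries.X ^ 2) ^ 2
      = 1 - (PowerSeries.X ^ 2 + PowerSeries.X ^ 2) + PowerSeries.X ^ 4 := by ring
  ext n
  rw [lhs, rhs]
  simp only [map_sub, map_add, PowerSeries.coeff_mul_X_pow', S, PowerSeries.coeff_mk,
    PowerSeries.coeff_one, PowerSeries.coeff_X_pow, ratioSqCoeff]
  split_ifs <;> omega

theorem coe_weightedBinomPoly {R : Type*} [CommRing R] (p : ℕ) [Fact p.Prime] [CharP R p] :
    (weightedBinomPoly R p : PowerSeries R)
      = -((1 + PowerSeries.X ^ p + PowerSeries.X ^ (2 * p)) *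
          PowerSeries.map (Int.castRingHom R) (PowerSeries.mk fun n ↦ ratioSqCoeff n)) := by
  have unit : IsUnit (((1 : PowerSeries R) - PowerSeries.X ^ 3) ^ 2) := by
    simp [PowerSeries.isUnit_iff_constantCoeff]
  refine unit.mul_left_cancel ?_
  have poly := congrArg (Polynomial.coeToPowerSeries.ringHom (R := R))
    (one_sub_X_pow_three_sq_mul_weightedBinomPoly (R := R) p)
  have series := congrArg (PowerSeries.map (Int.castRingHom R))
    one_sub_X_pow_three_sq_mul_mk_ratioSqCoeff
  simp only [map_mul, map_pow, map_sub, map_add, map_neg, map_one,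
    Polynomial.coeToPowerSeries.ringHom_apply, Polynomial.coe_X, PowerSeries.map_X] at poly series
  rw [poly]
  linear_combination (1 + PowerSeries.X ^ p + PowerSeries.X ^ (2 * p) : PowerSeries R) * series

theorem sum_range_mul_choose_eq_ratioSqCoeff {R : Type*} [CommRing R] (p : ℕ) [Fact p.Prime]
    [CharP R p] (d : ℕ) (hd : d ≤ p) :
    ∑ k ∈ range p, (k : R) * (2 * k).choose (k + d)
      = -((ratioSqCoeff ((p : ℤ) - 1 + d) + ratioSqCoeff ((d : ℤ) - 1) : ℤ) : R) := by
  have hp := (Fact.out : p.Prime).one_le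
  have h := congrArg (PowerSeries.coeff (p - 1 + d)) (coe_weightedBinomPoly (R := R) p)
  rw [Polynomial.coeff_coe, coeff_weightedBinomPoly] at h
  rw [h]
  simp only [add_mul, one_mul, map_neg, map_add, PowerSeries.coeff_X_pow_mul',
    PowerSeries.coeff_map, Int.coe_castRingHom, PowerSeries.coeff_mk]
  rw [if_neg (show ¬ 2 * p ≤ p - 1 + d by omega)]
  rcases Nat.eq_zero_or_pos d with rfl | hd0
  · rw [if_neg (by omega)]
    simp [ratioSqCoeff, Nat.cast_sub hp]
  · rw [if_pos (by omega), show p - 1 + d - p = d - 1 by omega]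
    push_cast [Nat.cast_sub hp, Nat.cast_sub hd0]
    ring

theorem neg_three_mul_ratioSqCoeff_modEq (p d : ℕ) (hp : p.Prime) :
    -3 * (ratioSqCoeff ((p : ℤ) - 1 + d) + ratioSqCoeff ((d : ℤ) - 1))
      ≡ (3 * (if (3 : ℤ) ∣ ((p : ℤ) - d) then 1 else 0) - 1) *
          (2 * chi3 ((p : ℤ) - d) - d) - 3 * (if p = 3 then 1 else 0) [ZMOD (p : ℤ)] := by
  rw [Int.modEq_iff_dvd]
  by_cases h3 : p = 3
  · subst h3
    simp only [ratioSqCoeff, chi3]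
    split_ifs <;> omega
  · have hp3 : ¬ 3 ∣ p := fun h => h3 ((Nat.prime_dvd_prime_iff_eq Nat.prime_three hp).mp h).symm
    have dvd_of_eq : ∀ x : ℤ, x = p ∨ x = -2 * p → (p : ℤ) ∣ x := by
      rintro x (rfl | rfl) <;> simp
    apply dvd_of_eq
    simp only [ratioSqCoeff, chi3, if_neg h3]
    split_ifs <;> omega

theorem sum_mul_central_binom_shift (p : ℕ) (hp : p.Prime) (d : ℕ) (hd : d ≤ p) :
    3 * ∑ k ∈ Finset.Icc 1 (p - 1), (k : ℤ) * ((2 * k).choose (k + d) : ℤ)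
      ≡ (3 * (if (3 : ℤ) ∣ ((p : ℤ) - d) then 1 else 0) - 1) *
          (2 * chi3 ((p : ℤ) - d) - d) - 3 * (if p = 3 then 1 else 0) [ZMOD (p : ℤ)] := by
  have : Fact p.Prime := ⟨hp⟩
  have drop_zero : ∑ k ∈ Icc 1 (p - 1), (k : ZMod p) * (2 * k).choose (k + d)
      = ∑ k ∈ range p, (k : ZMod p) * (2 * k).choose (k + d) := by
    rw [sum_range_eq_add_Ico _ hp.pos,
      Icc_sub_one_right_eq_Ico_of_not_isMin (by simpa using hp.ne_zero), Nat.cast_zero, zero_mul,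
      zero_add]
  refine Int.ModEq.trans ?_ (neg_three_mul_ratioSqCoeff_modEq p d hp)
  rw [← ZMod.intCast_eq_intCast_iff]
  push_cast
  rw [drop_zero, sum_range_mul_choose_eq_ratioSqCoeff p d hd]
  push_cast
  ring
end

section
/- Let p ≥ 5 be a prime. Then, working in ZMod p, 2 · ∑_{k=1}^{p−1} k⁻¹ · C_k = 3 · (1 − (p/3)). -/
/-!
Write `p = 2m + 1`. For `m < k < p - 1` the prime `p` divides `C_k`, and `C_{p-1} ≡ -1`, so
the terms with `k > m` contribute `1`. For `k ≤ m`, `m ≡ -1/2` gives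
`binom(2k, k) ≡ (-4)^k binom(m, k)`, hence `C_k / k ≡ (-4)^k binom(m, k) (1/k - 1/(k+1))`.
The `1/(k+1)` part sums, by the binomial theorem, to an expression in `(-3)^m`; the `1/k` part
equals `∑_{j ≤ m} ((-3)^j - 1)/j`.

Both remaining quantities come from `(1 + √-3)^p = 2^(p-1) (1 ± √-3)`, which holds because
`(1 + √-3)/2` is a primitive sixth root of unity. Its imaginary part gives `(-3)^m ≡ (p/3)`. Its
real part, compared with `(1 + 1)^p`, gives `∑_j binom(p, 2j) ((-3)^j - 1) = 0`; dividing by `p`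
and using `binom(p, 2j)/p ≡ -1/(2j)` shows that `∑_{j ≤ m} ((-3)^j - 1)/j ≡ 0`.
-/

open Finset Nat

theorem Finset.sum_range_succ_eq_add_sum_Icc {M : Type*} [AddCommMonoid M] (f : ℕ → M)
    (n : ℕ) :
    ∑ k ∈ range (n + 1), f k = f 0 + ∑ k ∈ Icc 1 n, f k := by
  rw [range_eq_Ico, sum_eq_sum_Ico_succ_bot n.succ_pos, zero_add, ← Ico_add_one_right_eq_Icc]
  rfl

theorem sum_Icc_choose_mul_pow {R : Type*} [CommRing R] (x : R) (n : ℕ) :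
    ∑ k ∈ Icc 1 n, (n.choose k : R) * x ^ k = (1 + x) ^ n - 1 := by
  rw [add_comm, add_pow, sum_range_succ_eq_add_sum_Icc]
  simp [mul_comm]

section Field

variable {K : Type*} [Field K]

theorem natCast_ne_zero_of_factorial_ne_zero {n k : ℕ} (hn : (n ! : K) ≠ 0) (hk : 0 < k)
    (hkn : k ≤ n) : (k : K) ≠ 0 :=
  ne_zero_of_dvd_ne_zero hn (Nat.cast_dvd_cast (Nat.dvd_factorial hk hkn))

theorem natCast_factorial_ne_zero_of_succ {n : ℕ} (hn : ((n + 1)! : K) ≠ 0) : (n ! : K) ≠ 0 :=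
  ne_zero_of_dvd_ne_zero hn (Nat.cast_dvd_cast (Nat.factorial_dvd_factorial n.le_succ))

theorem sum_Icc_choose_mul_pow_div (x : K) {n : ℕ} (hn : (n ! : K) ≠ 0) :
    ∑ k ∈ Icc 1 n, (n.choose k : K) * x ^ k / k = ∑ j ∈ Icc 1 n, ((1 + x) ^ j - 1) / j := by
  induction n with
  | zero => simp
  | succ n ih =>
    have hn1 : ((n + 1 : ℕ) : K) ≠ 0 :=
      natCast_ne_zero_of_factorial_ne_zero hn n.succ_pos le_rfl
    have hstep : ∀ k ∈ Icc 1 (n + 1), ((n + 1).choose k : K) * x ^ k / k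
        = (n.choose k : K) * x ^ k / k + ((n + 1).choose k : K) * x ^ k / (n + 1 : ℕ) := by
      intro k hk
      simp only [mem_Icc] at hk
      obtain ⟨j, rfl⟩ : ∃ j, k = j + 1 := ⟨k - 1, by omega⟩
      have hj : ((j + 1 : ℕ) : K) ≠ 0 :=
        natCast_ne_zero_of_factorial_ne_zero hn j.succ_pos hk.2
      have h1 := congrArg (Nat.cast : ℕ → K) (Nat.add_one_mul_choose_eq n j)
      have h2 := congrArg (Nat.cast : ℕ → K) (Nat.choose_succ_succ' n j)
      push_cast at h1 h2 hj hn1 ⊢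
      field_simp
      linear_combination x ^ (j + 1) * h1 + x ^ (j + 1) * (n + 1) * h2
    rw [sum_congr rfl hstep, sum_add_distrib, ← sum_div, sum_Icc_choose_mul_pow,
      sum_Icc_succ_top (by omega), sum_Icc_succ_top (by omega),
      ih (natCast_factorial_ne_zero_of_succ hn), Nat.choose_succ_self]
    simp

theorem mul_sum_range_choose_mul_pow_div_succ (x : K) {n : ℕ} (hn : ((n + 1)! : K) ≠ 0) :
    (n + 1) * x * ∑ k ∈ range (n + 1), (n.choose k : K) * x ^ k / (k + 1)
      = (1 + x) ^ (n + 1) - 1 := by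
  rw [add_comm 1 x, add_pow, sum_range_succ' _ (n + 1), mul_sum]
  simp only [one_pow, mul_one, pow_zero, Nat.choose_zero_right, Nat.cast_one, add_sub_cancel_right]
  refine sum_congr rfl fun k hk => ?_
  have hk1 : ((k + 1 : ℕ) : K) ≠ 0 :=
    natCast_ne_zero_of_factorial_ne_zero hn k.succ_pos (by simp at hk; omega)
  have h := congrArg (Nat.cast : ℕ → K) (Nat.add_one_mul_choose_eq n k)
  push_cast at h hk1 ⊢
  field_simp
  linear_combination x ^ (k + 1) * h

theorem natCast_centralBinom_eq_neg_four_pow_mul_choose {m k : ℕ} (hm : (2 * m + 1 : K) = 0)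
    (hkm : k ≤ m) (hk : (k ! : K) ≠ 0) : (k.centralBinom : K) = (-4) ^ k * m.choose k := by
  induction k with
  | zero => simp
  | succ k ih =>
    have hk1 : ((k + 1 : ℕ) : K) ≠ 0 :=
      natCast_ne_zero_of_factorial_ne_zero hk k.succ_pos le_rfl
    have h1 := congrArg (Nat.cast : ℕ → K) (Nat.succ_mul_centralBinom_succ k)
    have h2 := congrArg (Nat.cast : ℕ → K) (Nat.choose_succ_right_eq m k)
    push_cast [Nat.cast_sub (k.le_succ.trans hkm)] at h1 h2 hk1
    rw [ih (by omega) (natCast_factorial_ne_zero_of_succ hk)] at h1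
    apply mul_left_cancel₀ hk1
    linear_combination h1 - (-4) ^ (k + 1) * h2 + 2 * (-4) ^ k * m.choose k * hm

theorem natCast_catalan_eq_centralBinom_div {k : ℕ} (hk : (k + 1 : K) ≠ 0) :
    (catalan k : K) = k.centralBinom / (k + 1) := by
  rw [eq_div_iff hk, ← succ_mul_catalan_eq_centralBinom]
  push_cast
  ring

end Field

theorem Nat.mod_six_eq_one_or_five_of_coprime {n : ℕ} (hn : n.Coprime 6) :
    n % 6 = 1 ∨ n % 6 = 5 := by
  have h2 := Nat.Coprime.coprime_dvd_right (by norm_num : 2 ∣ 6) hn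
  have h3 := Nat.Coprime.coprime_dvd_right (by norm_num : 3 ∣ 6) hn
  rw [Nat.coprime_comm, Nat.prime_two.coprime_iff_not_dvd] at h2
  rw [Nat.coprime_comm, Nat.prime_three.coprime_iff_not_dvd] at h3
  omega

namespace Zsqrtd

theorem one_add_sqrtd_pow (d : ℤ) (n : ℕ) :
    (1 + sqrtd : ℤ√d) ^ n =
      ⟨∑ i ∈ range (n + 1), n.choose (2 * i) * d ^ i,
        ∑ i ∈ range (n + 1), n.choose (2 * i + 1) * d ^ i⟩ := by
  induction n with
  | zero => simp [Zsqrtd.ext_iff]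
  | succ n ih =>
    rw [pow_succ, ih, Zsqrtd.ext_iff]
    simp only [re_mul, im_mul, re_add, re_one, re_sqrtd, im_add, im_one, im_sqrtd, mul_one,
      add_zero, zero_add]
    constructor
    · have hE : ∑ i ∈ range (n + 1), (n.choose (2 * i + 1 + 1) : ℤ) * d ^ (i + 1)
          = ∑ i ∈ range (n + 1), (n.choose (2 * i) : ℤ) * d ^ i - 1 := by
        rw [sum_range_succ' (fun i => (n.choose (2 * i) : ℤ) * d ^ i), sum_range_succ]
        simp [Nat.choose_eq_zero_of_lt (by omega : n < 2 * n + 1 + 1)]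
        rfl
      rw [sum_range_succ' _ (n + 1)]
      simp only [show ∀ i, 2 * (i + 1) = 2 * i + 1 + 1 from fun i => rfl, Nat.choose_succ_succ',
        Nat.cast_add, add_mul, sum_add_distrib]
      have hO : d * ∑ i ∈ range (n + 1), (n.choose (2 * i + 1) : ℤ) * d ^ i
          = ∑ i ∈ range (n + 1), (n.choose (2 * i + 1) : ℤ) * d ^ (i + 1) := by
        rw [mul_sum]
        exact sum_congr rfl fun i _ => by ring
      rw [hE, hO]
      simp only [Nat.mul_zero, Nat.choose_zero_right, Nat.cast_one, pow_zero, mul_one]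
      ring
    · rw [sum_range_succ _ (n + 1)]
      simp only [Nat.choose_succ_succ', Nat.cast_add, add_mul, sum_add_distrib]
      simp [Nat.choose_eq_zero_of_lt (by omega : n < 2 * (n + 1)),
        Nat.choose_eq_zero_of_lt (by omega : n < 2 * (n + 1) + 1)]

theorem one_add_sqrtd_one_pow_succ (n : ℕ) :
    (1 + sqrtd : ℤ√1) ^ (n + 1) = ⟨2 ^ n, 2 ^ n⟩ := by
  induction n with
  | zero => decide
  | succ n ih =>
    rw [pow_succ, ih]
    ext <;> simp <;> ring

theorem one_add_sqrtd_pow_of_coprime_six {n : ℕ} (hn : n.Coprime 6) :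
    (1 + sqrtd : ℤ√(-3)) ^ n = ⟨2 ^ (n - 1), chi3 n * 2 ^ (n - 1)⟩ := by
  have h6 : (1 + sqrtd : ℤ√(-3)) ^ 6 = ((2 ^ 6 : ℤ) : ℤ√(-3)) := by decide
  obtain ⟨s, rfl | rfl⟩ : ∃ s, n = 6 * s + 1 ∨ n = 6 * s + 5 :=
    ⟨n / 6, by have := Nat.mod_six_eq_one_or_five_of_coprime hn; omega⟩
  · have hchi : chi3 (6 * s + 1 : ℕ) = 1 := by simp [chi3]; omega
    rw [hchi, pow_succ, pow_mul, h6, ← Int.cast_pow, ← pow_mul]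
    ext <;> simp only [re_smul, im_smul] <;> simp
  · have hchi : chi3 (6 * s + 5 : ℕ) = -1 := by simp [chi3]; omega
    have h5 : (1 + sqrtd : ℤ√(-3)) ^ 5 = ⟨2 ^ 4, -2 ^ 4⟩ := by decide
    rw [hchi, pow_add, pow_mul, h6, ← Int.cast_pow, ← pow_mul, h5]
    ext <;> simp only [re_smul, im_smul] <;> simp <;> ring

end Zsqrtd

theorem sum_range_choose_two_mul_mul_neg_three_pow_sub_one {n : ℕ} (hn : n.Coprime 6) :
    ∑ i ∈ range (n + 1), (n.choose (2 * i) : ℤ) * ((-3) ^ i - 1) = 0 := by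
  have hn0 : n ≠ 0 := by have := Nat.mod_six_eq_one_or_five_of_coprime hn; omega
  have h3 : ∑ i ∈ range (n + 1), (n.choose (2 * i) : ℤ) * (-3) ^ i = 2 ^ (n - 1) := by
    simpa using congrArg Zsqrtd.re
      ((Zsqrtd.one_add_sqrtd_pow (-3) n).symm.trans (Zsqrtd.one_add_sqrtd_pow_of_coprime_six hn))
  have h1 : ∑ i ∈ range (n + 1), (n.choose (2 * i) : ℤ) = 2 ^ (n - 1) := by
    have := Zsqrtd.one_add_sqrtd_one_pow_succ (n - 1)
    rw [Nat.sub_add_cancel (Nat.one_le_iff_ne_zero.mpr hn0), Zsqrtd.one_add_sqrtd_pow] at this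
    simpa using congrArg Zsqrtd.re this
  simp only [mul_sub, mul_one, sum_sub_distrib, h1, h3, sub_self]

theorem sum_range_choose_two_mul_add_one_mul_neg_three_pow {n : ℕ} (hn : n.Coprime 6) :
    ∑ i ∈ range (n + 1), (n.choose (2 * i + 1) : ℤ) * (-3) ^ i = chi3 n * 2 ^ (n - 1) := by
  simpa using congrArg Zsqrtd.im
    ((Zsqrtd.one_add_sqrtd_pow (-3) n).symm.trans (Zsqrtd.one_add_sqrtd_pow_of_coprime_six hn))

theorem Nat.Prime.dvd_choose_self_of_ne {p k : ℕ} (hp : p.Prime) (hk0 : k ≠ 0) (hkp : k ≠ p) :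
    p ∣ p.choose k := by
  rcases lt_or_gt_of_ne hkp with h | h
  · exact hp.dvd_choose_self hk0 h
  · rw [Nat.choose_eq_zero_of_lt h]
    exact dvd_zero p

theorem Nat.Prime.dvd_catalan {p k : ℕ} (hp : p.Prime) (hpk : p ≤ 2 * k) (hkp : k + 1 < p) :
    p ∣ catalan k := by
  have h : p ∣ (k + 1) * catalan k := by
    rw [succ_mul_catalan_eq_centralBinom, Nat.centralBinom, two_mul]
    exact hp.dvd_choose_add (by omega) (by omega) (by omega)
  exact (hp.dvd_mul.mp h).resolve_left fun h' => by have := Nat.le_of_dvd k.succ_pos h'; omega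

namespace ZMod

theorem natCast_ne_zero_of_lt {n k : ℕ} (hk : 0 < k) (hkn : k < n) : (k : ZMod n) ≠ 0 := by
  rw [Ne, natCast_eq_zero_iff]
  exact Nat.not_dvd_of_pos_of_lt hk hkn

variable {p : ℕ} [hp : Fact p.Prime]

theorem natCast_factorial_ne_zero {n : ℕ} (hn : n < p) : (n ! : ZMod p) ≠ 0 := by
  rw [Ne, natCast_eq_zero_iff, hp.out.dvd_factorial]
  omega

theorem natCast_choose_pred {k : ℕ} (hk : k < p) : ((p - 1).choose k : ZMod p) = (-1) ^ k := by
  induction k with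
  | zero => simp
  | succ k ih =>
    have h := congrArg (Nat.cast : ℕ → ZMod p) (Nat.choose_succ_succ' (p - 1) k)
    rw [Nat.sub_add_cancel hp.out.one_le,
      (natCast_eq_zero_iff _ _).mpr (hp.out.dvd_choose_self k.succ_ne_zero hk)] at h
    push_cast at h
    rw [ih (by omega)] at h
    linear_combination -h

theorem natCast_choose_div_self {k : ℕ} (hk0 : k ≠ 0) (hkp : k < p) :
    ((p.choose k / p : ℕ) : ZMod p) = (-1) ^ (k - 1) / k := by
  have h : p * (p.choose k / p * k) = p * (p - 1).choose (k - 1) := by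
    rw [← mul_assoc, Nat.mul_div_cancel' (hp.out.dvd_choose_self hk0 hkp)]
    have := Nat.add_one_mul_choose_eq (p - 1) (k - 1)
    rw [Nat.sub_add_cancel hp.out.one_le, Nat.sub_add_cancel (by omega)] at this
    exact this.symm
  rw [eq_div_iff (natCast_ne_zero_of_lt (by omega) hkp), ← natCast_choose_pred (by omega),
    ← Nat.cast_mul, Nat.eq_of_mul_eq_mul_left hp.out.pos h]

theorem neg_three_pow_half (h6 : p.Coprime 6) : (-3 : ZMod p) ^ (p / 2) = chi3 p := by
  have hp6 := Nat.mod_six_eq_one_or_five_of_coprime h6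
  have h2 : (2 : ZMod p) ≠ 0 := by
    exact_mod_cast natCast_ne_zero_of_lt two_pos (by have := hp.out.two_le; omega)
  have h := congrArg (Int.cast : ℤ → ZMod p)
    (sum_range_choose_two_mul_add_one_mul_neg_three_pow h6)
  push_cast at h
  rwa [sum_eq_single (p / 2), show 2 * (p / 2) + 1 = p by omega, Nat.choose_self, Nat.cast_one,
    one_mul, pow_card_sub_one_eq_one h2, mul_one] at h
  · intro i _ hi
    rw [(natCast_eq_zero_iff _ _).mpr (hp.out.dvd_choose_self_of_ne (by omega) (by omega)),
      zero_mul]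
  · exact fun h => absurd (mem_range.mpr (by omega)) h

theorem sum_Icc_half_neg_three_pow_sub_one_div (h6 : p.Coprime 6) :
    ∑ j ∈ Icc 1 (p / 2), ((-3 : ZMod p) ^ j - 1) / j = 0 := by
  have hp6 := Nat.mod_six_eq_one_or_five_of_coprime h6
  have hq : ∑ i ∈ range (p + 1), ((p.choose (2 * i) / p : ℕ) : ℤ) * ((-3) ^ i - 1) = 0 := by
    have h :
        (p : ℤ) * ∑ i ∈ range (p + 1), ((p.choose (2 * i) / p : ℕ) : ℤ) * ((-3) ^ i - 1)
        = ∑ i ∈ range (p + 1), (p.choose (2 * i) : ℤ) * ((-3) ^ i - 1) := by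
      rw [mul_sum]
      refine sum_congr rfl fun i _ => ?_
      rcases eq_or_ne i 0 with rfl | hi
      · simp
      rw [← mul_assoc, ← Nat.cast_mul,
        Nat.mul_div_cancel' (hp.out.dvd_choose_self_of_ne (by omega) (by omega))]
    rw [sum_range_choose_two_mul_mul_neg_three_pow_sub_one h6] at h
    exact (mul_eq_zero.mp h).resolve_left (by exact_mod_cast hp.out.ne_zero)
  have h := congrArg (Int.cast : ℤ → ZMod p) hq
  simp only [Int.cast_sum, Int.cast_mul, Int.cast_natCast, Int.cast_sub, Int.cast_pow,
    Int.cast_neg, Int.cast_ofNat, Int.cast_one, Int.cast_zero] at h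
  rw [← sum_subset (s₁ := Icc 1 (p / 2)) (fun i hi => by simp at hi ⊢; omega)] at h
  · have hterm : ∀ i ∈ Icc 1 (p / 2), ((p.choose (2 * i) / p : ℕ) : ZMod p) * ((-3) ^ i - 1)
        = -2⁻¹ * (((-3) ^ i - 1) / i) := by
      intro i hi
      simp only [mem_Icc] at hi
      rw [natCast_choose_div_self (by omega) (by omega), show 2 * i - 1 = 2 * (i - 1) + 1 by omega,
        pow_succ, pow_mul]
      push_cast
      field_simp
      ring
    rw [sum_congr rfl hterm, ← mul_sum] at h
    have h2 : (2 : ZMod p) ≠ 0 := by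
      exact_mod_cast natCast_ne_zero_of_lt two_pos (by have := hp.out.two_le; omega)
    exact (mul_eq_zero.mp h).resolve_left (by simpa using h2)
  · intro i _ hi
    simp only [mem_Icc, not_and_or, not_le] at hi
    rcases hi with hi | hi
    · simp [show i = 0 by omega]
    · rw [Nat.choose_eq_zero_of_lt (by omega), Nat.zero_div, Nat.cast_zero, zero_mul]

theorem natCast_centralBinom_self : (p.centralBinom : ZMod p) = 2 := by
  have h := (natCast_eq_natCast_iff _ _ _).mpr
    (Choose.choose_modEq_choose_mod_mul_choose_div_nat (n := 2 * p) (k := p) (p := p))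
  simpa [Nat.centralBinom, hp.out.pos] using h

theorem natCast_catalan_pred : (catalan (p - 1) : ZMod p) = -1 := by
  obtain rfl | hp2 := eq_or_ne p 2
  · rw [show 2 - 1 = 1 from rfl, catalan_one]
    rfl
  have h1 := Nat.succ_mul_centralBinom_succ (p - 1)
  rw [← succ_mul_catalan_eq_centralBinom (p - 1), Nat.sub_add_cancel hp.out.one_le,
    mul_left_comm] at h1
  have h := congrArg (Nat.cast : ℕ → ZMod p) (Nat.eq_of_mul_eq_mul_left hp.out.pos h1)
  push_cast [Nat.cast_sub hp.out.one_le] at h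
  rw [natCast_centralBinom_self, natCast_self] at h
  have h2 : (2 : ZMod p) ≠ 0 := by
    exact_mod_cast natCast_ne_zero_of_lt two_pos (lt_of_le_of_ne hp.out.two_le hp2.symm)
  apply mul_left_cancel₀ h2
  linear_combination h

theorem sum_Icc_pred_inv_mul_catalan (hp2 : p ≠ 2) :
    ∑ k ∈ Icc 1 (p - 1), (k : ZMod p)⁻¹ * catalan k
      = ∑ k ∈ Icc 1 (p / 2), (k : ZMod p)⁻¹ * catalan k + 1 := by
  have hp3 : 3 ≤ p := by have := hp.out.two_le; omega
  have hodd : p % 2 = 1 := hp.out.eq_two_or_odd.resolve_left hp2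
  have hsub : insert (p - 1) (Icc 1 (p / 2)) ⊆ Icc 1 (p - 1) := by
    intro k hk
    simp only [mem_insert, mem_Icc] at hk ⊢
    omega
  rw [← sum_subset hsub, sum_insert (by simp; omega), add_comm, natCast_catalan_pred,
    Nat.cast_pred hp.out.pos, natCast_self, zero_sub, inv_neg, inv_one, neg_one_mul, neg_neg]
  intro k hk hk'
  simp only [mem_insert, mem_Icc, not_or, not_and_or, not_le] at hk hk'
  rw [(natCast_eq_zero_iff _ _).mpr (hp.out.dvd_catalan (by omega) (by omega)), mul_zero]

theorem two_mul_sum_Icc_half_inv_mul_catalan (hp2 : p ≠ 2) :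
    2 * ∑ k ∈ Icc 1 (p / 2), (k : ZMod p)⁻¹ * catalan k
      = 2 * ∑ j ∈ Icc 1 (p / 2), ((-3 : ZMod p) ^ j - 1) / j + 1 - 3 * (-3) ^ (p / 2) := by
  set m := p / 2
  have hpm : 2 * m + 1 = p := by have := hp.out.eq_two_or_odd.resolve_left hp2; omega
  have hm1 : m + 1 < p := by have := hp.out.two_le; omega
  have hm : ((2 * m + 1 : ℕ) : ZMod p) = 0 := by rw [hpm, natCast_self]
  push_cast at hm
  have hfac : ∀ n ≤ m + 1, (n ! : ZMod p) ≠ 0 :=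
    fun n hn => natCast_factorial_ne_zero (by omega)
  have hterm : ∀ k ∈ Icc 1 m, (k : ZMod p)⁻¹ * catalan k
      = m.choose k * (-4) ^ k / k - m.choose k * (-4) ^ k / (k + 1) := by
    intro k hk
    simp only [mem_Icc] at hk
    have hk0 : (k : ZMod p) ≠ 0 := natCast_ne_zero_of_lt (by omega) (by omega)
    have hk1 : (k + 1 : ZMod p) ≠ 0 := by
      exact_mod_cast natCast_ne_zero_of_lt (n := p) k.succ_pos (by omega)
    rw [natCast_catalan_eq_centralBinom_div hk1,
      natCast_centralBinom_eq_neg_four_pow_mul_choose hm hk.2 (hfac k (by omega))]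
    field_simp
    ring
  have hB := mul_sum_range_choose_mul_pow_div_succ (-4 : ZMod p) (hfac _ le_rfl)
  rw [sum_range_succ_eq_add_sum_Icc] at hB
  rw [sum_congr rfl hterm, sum_sub_distrib, sum_Icc_choose_mul_pow_div _ (hfac _ m.le_succ)]
  norm_num at hB ⊢
  linear_combination
    hB + 2 * (1 + ∑ k ∈ Icc 1 m, (m.choose k : ZMod p) * (-4) ^ k / (k + 1)) * hm

end ZMod

theorem sum_inv_catalan (p : ℕ) (hp : p.Prime) (hp5 : 5 ≤ p) :
    2 * ∑ k ∈ Finset.Icc 1 (p - 1), (k : ZMod p)⁻¹ * (catalan k : ZMod p)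
      = 3 * (1 - (chi3 (p : ℤ) : ZMod p)) := by
  have := Fact.mk hp
  have h6 : p.Coprime 6 :=
    hp.coprime_iff_not_dvd.mpr fun h => by
      rcases hp.dvd_mul.mp (show p ∣ 2 * 3 from h) with h | h <;>
        have := Nat.le_of_dvd (by norm_num) h <;> omega
  rw [ZMod.sum_Icc_pred_inv_mul_catalan (by omega), mul_add,
    ZMod.two_mul_sum_Icc_half_inv_mul_catalan (by omega),
    ZMod.sum_Icc_half_neg_three_pow_sub_one_div h6, ZMod.neg_three_pow_half h6]
  ring
end

section
/- Let p be a prime and let d be an integer with 0 ≤ d ≤ p−1. Then 2 · ∑_{k=0}^{p−1} C_{k+d} ≡ 3·(p/3) − 1 + 2·∑_{0 ≤ k < d} C_k (mod p). -/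
/-!
Write `B k = (2k choose k)`. Shifting the window of summation by `d` changes the sum by
`∑_{k<d} (C_{p+k} - C_k)`, and Lucas' theorem gives `B (p m + k) ≡ B m * B k` for `k < p`,
hence `C_{p+k} ≡ 2 C_k` for `k + 1 < p`; so only `d = 0` needs work. From
`2 C_k = 4 B k - B (k+1)`, telescoping gives `2 ∑_{k<p} C_k = 3 ∑_{k<p} B k + 1 - B p`, and
`B p ≡ 2`. Finally, for `h = p / 2` we have `4 h + 2 ≡ 0`, so `B k` and `(-4)^k (h choose k)`
satisfy the same recursion for `k < p`, and by the binomial theorem `∑_{k<p} B k ≡ (-3)^h`.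
By Euler's criterion this is `(-3/p)`, which equals `(p/3)` because `(-3/b)` depends only on
`b mod 12`.
-/

open Finset

theorem sum_range_add_shift_add_sum_range {M : Type*} [AddCommMonoid M] (f : ℕ → M)
    (n d : ℕ) :
    ∑ k ∈ range n, f (k + d) + ∑ k ∈ range d, f k =
      ∑ k ∈ range n, f k + ∑ k ∈ range d, f (n + k) := by
  rw [← sum_range_add, add_comm, add_comm n d, sum_range_add]
  simp only [add_comm d]

theorem two_mul_catalan_add_centralBinom_succ (n : ℕ) :
    2 * catalan n + (n + 1).centralBinom = 4 * n.centralBinom := by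
  apply Nat.eq_of_mul_eq_mul_left n.succ_pos
  have hcat := succ_mul_catalan_eq_centralBinom n
  have hsucc := Nat.succ_mul_centralBinom_succ n
  calc (n + 1) * (2 * catalan n + (n + 1).centralBinom)
      = 2 * ((n + 1) * catalan n) + (n + 1) * (n + 1).centralBinom := by ring
    _ = (n + 1) * (4 * n.centralBinom) := by rw [hcat, hsucc]; ring

theorem succ_mul_choose_succ_add_mul_choose (n k : ℕ) :
    (k + 1) * n.choose (k + 1) + k * n.choose k = n * n.choose k := by
  rcases le_or_gt k n with hkn | hnk
  · rw [mul_comm, Nat.choose_succ_right_eq, mul_comm k, ← mul_add, Nat.sub_add_cancel hkn,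
      mul_comm]
  · simp [Nat.choose_eq_zero_of_lt hnk, Nat.choose_eq_zero_of_lt (hnk.trans k.lt_succ_self)]

theorem two_mul_sum_range_catalan_add_centralBinom (n : ℕ) :
    2 * ∑ k ∈ range n, catalan k + n.centralBinom =
      3 * ∑ k ∈ range n, k.centralBinom + 1 := by
  induction n with
  | zero => simp
  | succ n ih =>
    have := two_mul_catalan_add_centralBinom_succ n
    rw [sum_range_succ, sum_range_succ]
    omega

theorem chi3_natCast_mod_twelve (b : ℕ) : chi3 ((b % 12 : ℕ) : ℤ) = chi3 b := by
  unfold chi3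
  rw [show ((b % 12 : ℕ) : ℤ) % 3 = (b : ℤ) % 3 by omega]

theorem jacobiSym_neg_three {b : ℕ} (hb : Odd b) : jacobiSym (-3) b = chi3 b := by
  have h12 : b % 12 < 12 := Nat.mod_lt _ (by norm_num)
  have hodd : b % 2 = 1 := Nat.odd_iff.mp hb
  rw [jacobiSym.mod_right _ hb, ← chi3_natCast_mod_twelve,
    show 4 * (-3 : ℤ).natAbs = 12 from rfl]
  interval_cases h : b % 12 <;> first | omega | norm_num [chi3]

theorem ZMod.natCast_ne_zero_of_pos_of_lt {n p : ℕ} (h0 : 0 < n) (h : n < p) :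
    (n : ZMod p) ≠ 0 := by
  rw [Ne, ZMod.natCast_eq_zero_iff]
  exact Nat.not_dvd_of_pos_of_lt h0 h

theorem Nat.centralBinom_one : Nat.centralBinom 1 = 2 := rfl

section ZModPrime

variable {p : ℕ} [Fact p.Prime]

theorem natCast_choose_add_mul {a b c d : ℕ} (ha : a < p) (hc : c < p) :
    ((a + p * b).choose (c + p * d) : ZMod p) = a.choose c * b.choose d := by
  have hp := (Fact.out : p.Prime).pos
  rw [(ZMod.natCast_eq_natCast_iff _ _ _).mpr Choose.choose_modEq_choose_mod_mul_choose_div_nat,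
    Nat.add_mul_mod_self_left, Nat.add_mul_mod_self_left, Nat.add_mul_div_left _ _ hp,
    Nat.add_mul_div_left _ _ hp, Nat.mod_eq_of_lt ha, Nat.mod_eq_of_lt hc, Nat.div_eq_of_lt ha,
    Nat.div_eq_of_lt hc, Nat.cast_mul, zero_add, zero_add]

theorem natCast_centralBinom_mul_add (m : ℕ) {k : ℕ} (hk : k < p) :
    ((p * m + k).centralBinom : ZMod p) = m.centralBinom * k.centralBinom := by
  have hmk : p * m + k = k + p * m := add_comm _ _
  by_cases h2k : 2 * k < p
  · rw [Nat.centralBinom, show 2 * (p * m + k) = 2 * k + p * (2 * m) by ring, hmk,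
      natCast_choose_add_mul h2k hk, mul_comm]
    rfl
  · -- both sides vanish: the last base-`p` digit of `2 * k` is `2 * k - p < k`
    have hp2k : p ≤ 2 * k := by omega
    have hlt : 2 * k - p < p := by omega
    have hzero : (2 * k - p).choose k = 0 := Nat.choose_eq_zero_of_lt (by omega)
    have hk0 : (k.centralBinom : ZMod p) = 0 := by
      have := natCast_choose_add_mul (b := 1) (d := 0) hlt hk
      rwa [show 2 * k - p + p * 1 = 2 * k by omega, mul_zero, add_zero, hzero, Nat.cast_zero,
        zero_mul] at this
    rw [hk0, mul_zero, Nat.centralBinom,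
      show 2 * (p * m + k) = 2 * k - p + p * (2 * m + 1) by zify [hp2k]; ring,
      hmk, natCast_choose_add_mul hlt hk, hzero, Nat.cast_zero, zero_mul]

theorem natCast_catalan_mul_add (m : ℕ) {k : ℕ} (hk : k + 1 < p) :
    (catalan (p * m + k) : ZMod p) = m.centralBinom * catalan k := by
  apply mul_left_cancel₀ (ZMod.natCast_ne_zero_of_pos_of_lt k.succ_pos hk)
  calc ((k + 1 : ℕ) : ZMod p) * catalan (p * m + k)
      = ((p * m + k + 1 : ℕ) : ZMod p) * catalan (p * m + k) := by simp
    _ = (p * m + k).centralBinom := by rw [← succ_mul_catalan_eq_centralBinom, Nat.cast_mul]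
    _ = m.centralBinom * k.centralBinom := natCast_centralBinom_mul_add m (by omega)
    _ = ((k + 1 : ℕ) : ZMod p) * (m.centralBinom * catalan k) := by
      rw [← succ_mul_catalan_eq_centralBinom k, Nat.cast_mul]; ring

theorem natCast_centralBinom_eq_neg_four_pow_mul_choose_s14 {k : ℕ} (hk : k < p) :
    (k.centralBinom : ZMod p) = (-4) ^ k * (p / 2).choose k := by
  have hhalf : (4 * (p / 2 : ℕ) + 2 : ZMod p) = 0 := by
    have : p ∣ 2 * (2 * (p / 2) + 1) := by
      rcases (Fact.out : p.Prime).eq_two_or_odd' with rfl | hodd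
      · exact dvd_mul_right 2 _
      · rw [Nat.two_mul_div_two_add_one_of_odd hodd]
        exact dvd_mul_left p 2
    rw [← ZMod.natCast_eq_zero_iff] at this
    push_cast at this
    linear_combination this
  induction k with
  | zero => simp
  | succ k ih =>
    apply mul_left_cancel₀ (ZMod.natCast_ne_zero_of_pos_of_lt k.succ_pos hk)
    have hcentral := congrArg (Nat.cast : ℕ → ZMod p) (Nat.succ_mul_centralBinom_succ k)
    have hchoose :=
      congrArg (Nat.cast : ℕ → ZMod p) (succ_mul_choose_succ_add_mul_choose (p / 2) k)
    push_cast at hcentral hchoose ⊢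
    linear_combination hcentral + 2 * (2 * k + 1) * ih (by omega) - (-4) ^ (k + 1) * hchoose
      + (-4) ^ k * ((p / 2).choose k : ZMod p) * hhalf

theorem sum_range_centralBinom_eq_neg_three_pow :
    ∑ k ∈ range p, (k.centralBinom : ZMod p) = (-3) ^ (p / 2) := by
  have hp := (Fact.out : p.Prime)
  calc ∑ k ∈ range p, (k.centralBinom : ZMod p)
      = ∑ k ∈ range p, (-4) ^ k * ((p / 2).choose k : ZMod p) :=
        sum_congr rfl fun k hk => natCast_centralBinom_eq_neg_four_pow_mul_choose_s14 (mem_range.1 hk)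
    _ = ∑ k ∈ range (p / 2 + 1), (-4) ^ k * ((p / 2).choose k : ZMod p) :=
        eventually_constant_sum (fun k hk => by simp [Nat.choose_eq_zero_of_lt hk])
          (by have := hp.two_le; omega)
    _ = (-4 + 1) ^ (p / 2) := by simp [add_pow]
    _ = (-3) ^ (p / 2) := by norm_num

theorem intCast_chi3_eq_neg_three_pow : ((chi3 p : ℤ) : ZMod p) = (-3) ^ (p / 2) := by
  rcases (Fact.out : p.Prime).eq_two_or_odd' with rfl | hodd
  · simp [chi3]
    rfl
  · rw [← jacobiSym_neg_three hodd, ← jacobiSym.legendreSym.to_jacobiSym, legendreSym.eq_pow]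
    push_cast
    rfl

theorem two_mul_sum_range_catalan :
    2 * ∑ k ∈ range p, (catalan k : ZMod p) = 3 * ((chi3 p : ℤ) : ZMod p) - 1 := by
  have h := congrArg (Nat.cast : ℕ → ZMod p) (two_mul_sum_range_catalan_add_centralBinom p)
  have hcentral : (p.centralBinom : ZMod p) = 2 := by
    simpa [Nat.centralBinom_one] using
      natCast_centralBinom_mul_add (p := p) 1 (Fact.out : p.Prime).pos
  push_cast at h
  rw [hcentral, sum_range_centralBinom_eq_neg_three_pow, ← intCast_chi3_eq_neg_three_pow] at h
  linear_combination h

end ZModPrime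

theorem sum_catalan_shift (p : ℕ) (hp : p.Prime) (d : ℕ) (hd : d ≤ p - 1) :
    2 * ∑ k ∈ Finset.range p, (catalan (k + d) : ℤ)
      ≡ 3 * chi3 (p : ℤ) - 1 + 2 * ∑ k ∈ Finset.range d, (catalan k : ℤ) [ZMOD (p : ℤ)] := by
  have := Fact.mk hp
  rw [← ZMod.intCast_eq_intCast_iff]
  push_cast
  have hshift := sum_range_add_shift_add_sum_range (fun k => (catalan k : ZMod p)) p d
  have hdouble : ∑ k ∈ range d, (catalan (p + k) : ZMod p) =
      2 * ∑ k ∈ range d, (catalan k : ZMod p) := by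
    rw [mul_sum]
    refine sum_congr rfl fun k hk => ?_
    have hk1 : k + 1 < p := by have := mem_range.1 hk; omega
    simpa [Nat.centralBinom_one] using natCast_catalan_mul_add (p := p) 1 hk1
  linear_combination 2 * hshift + 2 * hdouble + two_mul_sum_range_catalan (p := p)
end

section
/- Let d be a natural number and let δ ∈ {0,1}. Then, as an identity of rational numbers, C_d = (1 − 2δ)·∑_{0 ≤ k < d} C_k + (−1)^δ · ∑_{i=0}^{d} ((i−δ)/3) · C_{d,i+1} + 1 + δ; moreover C_d = (1/2)·∑_{j=1}^{d+1} (1 − 3·[3∣j]) · C_{d,j} + 3/2. -/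
/-- `chooseN a b` is the binomial coefficient `binom(a, b)` with natural upper argument
and integer lower argument; it is `0` when `b < 0` or `b > a`. -/
def chooseN (a : ℕ) (b : ℤ) : ℤ := if 0 ≤ b then (a.choose b.toNat : ℤ) else 0

/-- The generalized Catalan-type numbers
`C_{n,j} = 2·binom(2n, n−j) − binom(2n, n−1−j) − binom(2n, n+1−j)`. -/
def catD (n j : ℕ) : ℤ :=
  2 * chooseN (2 * n) ((n : ℤ) - j) - chooseN (2 * n) ((n : ℤ) - 1 - j)
    - chooseN (2 * n) ((n : ℤ) + 1 - j)

/-!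
Write `C_{n,j} = B_{n,j} - B_{n,j-1}` with the ballot numbers
`B_{n,j} = binom(2n, n-j) - binom(2n, n-j-1)`. Pascal's rule applied twice gives
`C_{n+1,j} = C_{n,j} + B_{n,j+1} - B_{n,j-2}`, so the sum of `C_{n,j}` over a residue class
`j ≡ r (mod 3)` telescopes and drops by `B_{n,r-2}` from `n` to `n + 1`. Since
`B_{n,-1} = -C_n`, `B_{n,0} = C_n` and `B_{n,1} = C_{n+1} - C_n`, the three class sums are
`∑_{k<n} C_k - 1`, `-∑_{k<n} C_k` and `1 - C_n`, while the full sum telescopes to `-C_n`.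
Both identities are linear combinations of these.
-/

open Finset

lemma chooseN_of_neg {a : ℕ} {b : ℤ} (h : b < 0) : chooseN a b = 0 := by
  simp [chooseN, not_le.mpr h]

lemma chooseN_of_lt {a : ℕ} {b : ℤ} (h : (a : ℤ) < b) : chooseN a b = 0 := by
  rw [chooseN, if_pos (by omega), Nat.choose_eq_zero_of_lt (by omega), Nat.cast_zero]

lemma chooseN_symm (a : ℕ) (b : ℤ) : chooseN a (a - b) = chooseN a b := by
  rcases lt_or_ge b 0 with hb | hb
  · rw [chooseN_of_neg hb, chooseN_of_lt (by omega)]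
  rcases lt_or_ge (a : ℤ) b with hab | hab
  · rw [chooseN_of_lt hab, chooseN_of_neg (by omega)]
  lift b to ℕ using hb
  rw [show (a : ℤ) - b = ((a - b : ℕ) : ℤ) by omega]
  simp only [chooseN, Nat.cast_nonneg, if_true, Int.toNat_natCast]
  rw [Nat.choose_symm (by omega)]

lemma chooseN_succ (a : ℕ) (b : ℤ) : chooseN (a + 1) b = chooseN a b + chooseN a (b - 1) := by
  rcases lt_trichotomy b 0 with h | rfl | h
  · rw [chooseN_of_neg h, chooseN_of_neg h, chooseN_of_neg (by omega), add_zero]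
  · simp [chooseN]
  · obtain ⟨k, rfl⟩ : ∃ k : ℕ, b = k + 1 := ⟨(b - 1).toNat, by omega⟩
    simp only [chooseN, add_sub_cancel_right, if_pos (by omega : (0 : ℤ) ≤ k + 1),
      if_pos (by omega : (0 : ℤ) ≤ k), show ((k : ℤ) + 1).toNat = k + 1 by omega,
      Int.toNat_natCast, Nat.choose_succ_succ, Nat.cast_add]
    ring

lemma chooseN_two_mul_succ (n : ℕ) (b : ℤ) :
    chooseN (2 * (n + 1)) b
      = chooseN (2 * n) b + 2 * chooseN (2 * n) (b - 1) + chooseN (2 * n) (b - 2) := by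
  rw [show 2 * (n + 1) = 2 * n + 1 + 1 by ring, chooseN_succ, chooseN_succ, chooseN_succ]
  ring_nf

def ballot (n : ℕ) (j : ℤ) : ℤ := chooseN (2 * n) (n - j) - chooseN (2 * n) (n - j - 1)

lemma ballot_of_lt {n : ℕ} {j : ℤ} (h : (n : ℤ) < j) : ballot n j = 0 := by
  rw [ballot, chooseN_of_neg (by omega), chooseN_of_neg (by omega), sub_zero]

lemma ballot_succ (n : ℕ) (j : ℤ) :
    ballot (n + 1) j = ballot n (j - 1) + 2 * ballot n j + ballot n (j + 1) := by
  simp only [ballot, Nat.cast_succ, chooseN_two_mul_succ]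
  ring_nf

lemma ballot_zero (n : ℕ) : ballot n 0 = catalan n := by
  cases n with
  | zero => simp [ballot, chooseN]
  | succ m =>
    have hchoose : ((2 * (m + 1)).choose (m + 1) * (m + 1) : ℤ)
        = (2 * (m + 1)).choose m * (m + 2) := by
      exact_mod_cast (show 2 * (m + 1) - m = m + 2 by omega) ▸ Nat.choose_succ_right_eq _ m
    have hcentral : ((m + 2) * catalan (m + 1) : ℤ) = (2 * (m + 1)).choose (m + 1) := by
      exact_mod_cast succ_mul_catalan_eq_centralBinom (m + 1)
    have hballot : ballot (m + 1) 0 = (2 * (m + 1)).choose (m + 1) - (2 * (m + 1)).choose m := by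
      simp only [ballot, chooseN, sub_zero, if_pos (by omega : (0 : ℤ) ≤ (m + 1 : ℕ)),
        if_pos (by omega : (0 : ℤ) ≤ (m + 1 : ℕ) - 1), Int.toNat_natCast,
        show ((m + 1 : ℕ) - 1 : ℤ).toNat = m by omega]
    refine mul_left_cancel₀ (by positivity : ((m : ℤ) + 2) ≠ 0) ?_
    rw [hballot]
    linear_combination hchoose - hcentral


lemma ballot_neg_one (n : ℕ) : ballot n (-1) = -ballot n 0 := by
  have hsymm : chooseN (2 * n) (n + 1) = chooseN (2 * n) (n - 1) := by
    rw [← chooseN_symm]; congr 1; push_cast; ring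
  simp only [ballot, sub_neg_eq_add, add_sub_cancel_right, sub_zero, hsymm]
  ring

lemma ballot_one (n : ℕ) : ballot n 1 = catalan (n + 1) - catalan n := by
  have h := ballot_succ n 0
  rw [zero_sub, zero_add, ballot_neg_one, ballot_zero, ballot_zero] at h
  linarith

lemma catD_eq_ballot_sub (n j : ℕ) : catD n j = ballot n j - ballot n (j - 1) := by
  simp only [catD, ballot]
  ring_nf

lemma catD_of_lt {n j : ℕ} (h : n + 1 < j) : catD n j = 0 := by
  rw [catD_eq_ballot_sub, ballot_of_lt (by omega), ballot_of_lt (by omega), sub_zero]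

lemma catD_succ (n j : ℕ) : catD (n + 1) j = catD n j + ballot n (j + 1) - ballot n (j - 2) := by
  rw [catD_eq_ballot_sub, catD_eq_ballot_sub, ballot_succ, ballot_succ]
  ring_nf

lemma sum_range_catD_succ (n : ℕ) : ∑ i ∈ range (n + 1), catD n (i + 1) = -catalan n := by
  simp only [catD_eq_ballot_sub, Nat.cast_succ, add_sub_cancel_right]
  have htelescope := sum_range_sub (fun i : ℕ => ballot n i) (n + 1)
  push_cast at htelescope
  rw [htelescope, ballot_of_lt (by omega), ballot_zero, zero_sub]

/-- `∑_{j ≡ r (mod 3), j ≥ r} C_{n,j}`; the range `m ≤ n` suffices since `C_{n,j} = 0` for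
`j > n + 1`. -/
def residueSum (n r : ℕ) : ℤ := ∑ m ∈ range (n + 1), catD n (3 * m + r)

lemma residueSum_succ (n r : ℕ) : residueSum (n + 1) r = residueSum n r - ballot n (r - 2) := by
  have hstep : ∀ m : ℕ, catD (n + 1) (3 * m + r)
      = catD n (3 * m + r) + (ballot n (3 * (m + 1 : ℕ) + r - 2) - ballot n (3 * m + r - 2)) := by
    intro m
    rw [catD_succ]
    push_cast
    ring_nf
  rw [residueSum, sum_range_succ, catD_of_lt (by omega), add_zero]
  simp only [hstep, sum_add_distrib]
  rw [sum_range_sub (fun m : ℕ => ballot n (3 * m + r - 2)), ballot_of_lt (by push_cast; omega),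
    residueSum, Nat.cast_zero, mul_zero, zero_add]
  ring

lemma residueSum_one (n : ℕ) : residueSum n 1 = ∑ k ∈ range n, (catalan k : ℤ) - 1 := by
  induction n with
  | zero => rfl
  | succ n ih =>
    rw [residueSum_succ, ih, sum_range_succ, show ((1 : ℕ) : ℤ) - 2 = -1 by norm_num,
      ballot_neg_one, ballot_zero]
    ring

lemma residueSum_two (n : ℕ) : residueSum n 2 = -∑ k ∈ range n, (catalan k : ℤ) := by
  induction n with
  | zero => rfl
  | succ n ih =>
    rw [residueSum_succ, ih, sum_range_succ, show ((2 : ℕ) : ℤ) - 2 = 0 by norm_num, ballot_zero]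
    ring

lemma residueSum_three (n : ℕ) : residueSum n 3 = 1 - catalan n := by
  induction n with
  | zero => simp [residueSum, catD, chooseN]
  | succ n ih =>
    rw [residueSum_succ, ih, show ((3 : ℕ) : ℤ) - 2 = 1 by norm_num, ballot_one]
    ring

lemma sum_range_mul_ite_mod {M : Type*} [AddCommMonoid M] (g : ℕ → M) {k r : ℕ} (hr : r < k)
    (N : ℕ) :
    ∑ i ∈ range (k * N), (if i % k = r then g i else 0) = ∑ m ∈ range N, g (k * m + r) := by
  induction N with
  | zero => simp
  | succ N ih =>
    have hblock : ∀ j ∈ range k, (if (k * N + j) % k = r then g (k * N + j) else 0)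
        = if j = r then g (k * N + j) else 0 := by
      intro j hj
      rw [Nat.mul_add_mod, Nat.mod_eq_of_lt (mem_range.1 hj)]
    rw [Nat.mul_succ, sum_range_add, ih, sum_range_succ, sum_congr rfl hblock,
      sum_ite_eq', if_pos (mem_range.2 hr)]

lemma sum_range_ite_mod_three_catD (d : ℕ) {r : ℕ} (hr : r < 3) :
    ∑ i ∈ range (d + 1), (if i % 3 = r then catD d (i + 1) else 0) = residueSum d (r + 1) := by
  rw [sum_subset (range_subset_range.2 (by omega : d + 1 ≤ 3 * (d + 1))),
    sum_range_mul_ite_mod (fun i => catD d (i + 1)) hr, residueSum]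
  · simp only [add_assoc]
  intro i _ hi
  rw [catD_of_lt (by simp at hi; omega), ite_self]

lemma chi3_natCast_mul (i : ℕ) (x : ℤ) :
    chi3 i * x = (if i % 3 = 1 then x else 0) - (if i % 3 = 2 then x else 0) := by
  obtain h | h | h : i % 3 = 0 ∨ i % 3 = 1 ∨ i % 3 = 2 := by omega
  all_goals simp [chi3, h, show (i : ℤ) % 3 = (i % 3 : ℕ) by omega]

lemma chi3_natCast_sub_one_mul (i : ℕ) (x : ℤ) :
    chi3 (i - 1) * x = (if i % 3 = 2 then x else 0) - (if i % 3 = 0 then x else 0) := by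
  obtain h | h | h : i % 3 = 0 ∨ i % 3 = 1 ∨ i % 3 = 2 := by omega
  · simp [chi3, h, show ((i : ℤ) - 1) % 3 = 2 by omega]
  · simp [chi3, h, show ((i : ℤ) - 1) % 3 = 0 by omega]
  · simp [chi3, h, show ((i : ℤ) - 1) % 3 = 1 by omega]

lemma sum_chi3_mul_catD (d : ℕ) :
    ∑ i ∈ range (d + 1), chi3 i * catD d (i + 1)
      = catalan d - ∑ k ∈ range d, (catalan k : ℤ) - 1 := by
  simp only [chi3_natCast_mul, sum_sub_distrib]
  rw [sum_range_ite_mod_three_catD d (by norm_num), sum_range_ite_mod_three_catD d (by norm_num),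
    residueSum_two, residueSum_three]
  ring

lemma sum_chi3_sub_one_mul_catD (d : ℕ) :
    ∑ i ∈ range (d + 1), chi3 (i - 1) * catD d (i + 1)
      = 2 - catalan d - ∑ k ∈ range d, (catalan k : ℤ) := by
  simp only [chi3_natCast_sub_one_mul, sum_sub_distrib]
  rw [sum_range_ite_mod_three_catD d (by norm_num), sum_range_ite_mod_three_catD d (by norm_num),
    residueSum_three, residueSum_one]
  ring

lemma sum_Icc_mul_catD (d : ℕ) :
    ∑ j ∈ Icc 1 (d + 1), (1 - 3 * if 3 ∣ j then 1 else 0) * catD d j = 2 * catalan d - 3 := by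
  have hweight : ∀ i ∈ range (d + 1), (1 - 3 * if 3 ∣ i + 1 then 1 else 0) * catD d (i + 1)
      = catD d (i + 1) - 3 * if i % 3 = 2 then catD d (i + 1) else 0 := by
    intro i _
    by_cases h : i % 3 = 2
    · rw [if_pos (by omega), if_pos h]; ring
    · rw [if_neg (by omega), if_neg h]; ring
  rw [← Ico_add_one_right_eq_Icc, sum_Ico_eq_sum_range, add_tsub_cancel_right]
  simp only [add_comm 1]
  rw [sum_congr rfl hweight, sum_sub_distrib, ← mul_sum, sum_range_catD_succ,
    sum_range_ite_mod_three_catD d (by norm_num), residueSum_three]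
  ring

theorem catalan_recurrence (d : ℕ) (δ : ℕ) (hδ : δ ≤ 1) :
    ((catalan d : ℚ)
        = (1 - 2 * δ) * ∑ k ∈ Finset.range d, (catalan k : ℚ)
          + (-1 : ℚ) ^ δ *
              ∑ i ∈ Finset.range (d + 1), (chi3 ((i : ℤ) - δ) : ℚ) * (catD d (i + 1) : ℚ)
          + 1 + δ)
    ∧ (catalan d : ℚ)
        = (1 / 2) * ∑ j ∈ Finset.Icc 1 (d + 1),
            (1 - 3 * (if 3 ∣ j then 1 else 0)) * (catD d j : ℚ) + 3 / 2 := by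
  have hweighted := congrArg (Int.cast : ℤ → ℚ) (sum_Icc_mul_catD d)
  push_cast [apply_ite (Int.cast : ℤ → ℚ)] at hweighted
  refine ⟨?_, by linarith⟩
  interval_cases δ
  · have hchi := congrArg (Int.cast : ℤ → ℚ) (sum_chi3_mul_catD d)
    push_cast at hchi
    simp only [Nat.cast_zero, sub_zero, pow_zero, one_mul, mul_zero]
    linarith
  · have hchi := congrArg (Int.cast : ℤ → ℚ) (sum_chi3_sub_one_mul_catD d)
    push_cast at hchi
    simp only [Nat.cast_one, pow_one, mul_one, neg_one_mul]
    linarith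
end
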